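/- arXiv:math/0501371 — 5 statements merged into one kernel-verified Lean document; each statement's English description precedes it below -/
import Mathlib

section
/- Let A be a lattice with a least element 0 such that for every lattice L with a least element, the tensor product A⊗L is a lattice. Then for every lattice L with a least element, A⊗L is a capped tensor product. (In the paper's terminology: every weakly amenable lattice is amenable.) -/
/-! Tensor products of lattices with zero: bi-ideals, pure tensors,
compact bi-ideals, capped bi-ideals. -/

universe u v

section TensorDefs

variable {A : Type u} {B : Type v}

/-- The set `⊥_{A,B} = (A × {0}) ∪ ({0} × B)`. -/
def tensorBot (A : Type u) (B : Type v) [Lattice A] [OrderBot A]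
    [Lattice B] [OrderBot B] : Set (A × B) :=
  {p | p.1 = ⊥ ∨ p.2 = ⊥}

/-- A bi-ideal of `A × B`: a down-set containing `⊥_{A,B}` and closed under
lateral joins. -/
def IsBiIdeal [Lattice A] [OrderBot A] [Lattice B] [OrderBot B]
    (I : Set (A × B)) : Prop :=
  tensorBot A B ⊆ I ∧
  (∀ p ∈ I, ∀ q : A × B, q.1 ≤ p.1 → q.2 ≤ p.2 → q ∈ I) ∧
  (∀ a : A, ∀ b b' : B, (a, b) ∈ I → (a, b') ∈ I → (a, b ⊔ b') ∈ I) ∧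
  (∀ a a' : A, ∀ b : B, (a, b) ∈ I → (a', b) ∈ I → (a ⊔ a', b) ∈ I)

/-- The pure tensor `a ⊗ b = ⊥_{A,B} ∪ {(x,y) : x ≤ a ∧ y ≤ b}`. -/
def pureTensor [Lattice A] [OrderBot A] [Lattice B] [OrderBot B]
    (a : A) (b : B) : Set (A × B) :=
  tensorBot A B ∪ {p | p.1 ≤ a ∧ p.2 ≤ b}

/-- The smallest bi-ideal of `A × B` containing a given set, i.e. the join in the
lattice `A ⊗̄ B` of bi-ideals of the pure tensors contained in it. -/
def biIdealGen [Lattice A] [OrderBot A] [Lattice B] [OrderBot B]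
    (S : Set (A × B)) : Set (A × B) :=
  ⋂₀ {I : Set (A × B) | IsBiIdeal I ∧ S ⊆ I}

/-- The compact elements of `A ⊗̄ B` are exactly the bi-ideals that are finite
joins of pure tensors; these form the tensor product `A ⊗ B`. -/
def IsCompactBiIdeal [Lattice A] [OrderBot A] [Lattice B] [OrderBot B]
    (I : Set (A × B)) : Prop :=
  ∃ s : Finset (A × B), I = biIdealGen (⋃ p ∈ s, pureTensor p.1 p.2)

/-- `A ⊗ B` is a lattice iff the intersection of any two compact bi-ideals is
compact. -/
def TensorIsLattice (A : Type u) (B : Type v) [Lattice A] [OrderBot A]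
    [Lattice B] [OrderBot B] : Prop :=
  ∀ I J : Set (A × B), IsCompactBiIdeal I → IsCompactBiIdeal J →
    IsCompactBiIdeal (I ∩ J)

/-- A bi-ideal is capped if it is the down-set generated by `Γ ∪ ⊥_{A,B}` for some
finite `Γ ⊆ A × B`. -/
def IsCappedBiIdeal [Lattice A] [OrderBot A] [Lattice B] [OrderBot B]
    (I : Set (A × B)) : Prop :=
  ∃ Γ : Finset (A × B),
    I = tensorBot A B ∪ {q : A × B | ∃ p ∈ Γ, q.1 ≤ p.1 ∧ q.2 ≤ p.2}

/-- `A ⊗ B` is a capped tensor product if every element of `A ⊗ B` (i.e. every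
compact bi-ideal of `A × B`) is capped. -/
def IsCappedTensorProduct (A : Type u) (B : Type v) [Lattice A] [OrderBot A]
    [Lattice B] [OrderBot B] : Prop :=
  ∀ I : Set (A × B), IsCompactBiIdeal I → IsCappedBiIdeal I

end TensorDefs

/-! Embed `L` into the lattice of pointed lower sets `(e, S)`, `e ∈ S`, by `d ↦ (d, ↓d)`, and let
`t = (⊥, L)`. Let `I` be generated by the pure tensors of a finite `s ⊆ A × L`. Each nonzero
`q ∈ I` gives the element `(q.1, (⊥, ↓q.2))` of the intersection of the image of `I` with
`(⋁ s.1) ⊗ t`: meeting with `t` forgets the point but keeps the tag `↓q.2`. By hypothesis this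
intersection is generated by a finite `G`. Below `t` we have `w.1 = ⊥ ∨ w.2.point = ⊥`, so lateral
joins create no new tags, and `q.1 ≤ ⋁ {g.1 | g ∈ G, q.2 ∈ tag g}`. Each such `g` lies below the
image of some `p_g ∈ I`, so `q ≤ (⋁ p_g.1, ⋀ p_g.2)`, and these finitely many elements of `I` cap
it. -/

section BiIdeal

variable {A B C : Type*} [Lattice A] [OrderBot A] [Lattice B] [OrderBot B] [Lattice C] [OrderBot C]
  {I : Set (A × B)}

theorem IsBiIdeal.sup_inf_mem (hI : IsBiIdeal I) {p q : A × B} (hp : p ∈ I) (hq : q ∈ I) :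
    (p.1 ⊔ q.1, p.2 ⊓ q.2) ∈ I :=
  hI.2.2.2 _ _ _ (hI.2.1 p hp _ le_rfl inf_le_left) (hI.2.1 q hq _ le_rfl inf_le_right)

theorem IsBiIdeal.finset_sup_inf'_mem {ι : Type*} (hI : IsBiIdeal I) {T : Finset ι}
    (hT : T.Nonempty) {p : ι → A × B} (hp : ∀ i ∈ T, p i ∈ I) :
    (T.sup fun i => (p i).1, T.inf' hT fun i => (p i).2) ∈ I := by
  induction hT using Finset.Nonempty.cons_induction with
  | singleton i => simpa using hp i (Finset.mem_singleton_self i)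
  | cons i T hi hT ih =>
    rw [Finset.sup_cons, Finset.inf'_cons hT]
    exact hI.sup_inf_mem (hp i (Finset.mem_cons_self i T))
      (ih fun j hj => hp j (Finset.mem_cons_of_mem hj))

theorem IsBiIdeal.pureTensor_subset (hI : IsBiIdeal I) {a : A} {b : B} (h : (a, b) ∈ I) :
    pureTensor a b ⊆ I := by
  rintro q (hq | hq)
  · exact hI.1 hq
  · exact hI.2.1 _ h q hq.1 hq.2

theorem isBiIdeal_biIdealGen (S : Set (A × B)) : IsBiIdeal (biIdealGen S) :=
  ⟨fun _ hp _ hJ => hJ.1.1 hp, fun p hp q h1 h2 _ hJ => hJ.1.2.1 p (hp _ hJ) q h1 h2,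
    fun a b b' hb hb' _ hJ => hJ.1.2.2.1 a b b' (hb _ hJ) (hb' _ hJ),
    fun a a' b ha ha' _ hJ => hJ.1.2.2.2 a a' b (ha _ hJ) (ha' _ hJ)⟩

theorem biIdealGen_pureTensors_subset (hI : IsBiIdeal I) {s : Finset (A × B)}
    (hs : ∀ p ∈ s, p ∈ I) : biIdealGen (⋃ p ∈ s, pureTensor p.1 p.2) ⊆ I :=
  Set.sInter_subset_of_mem ⟨hI, Set.iUnion₂_subset fun p hp => hI.pureTensor_subset (hs p hp)⟩

theorem mem_biIdealGen_pureTensors {s : Finset (A × B)} {p : A × B} (hp : p ∈ s) :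
    p ∈ biIdealGen (⋃ p ∈ s, pureTensor p.1 p.2) :=
  fun _ hJ => hJ.2 (Set.mem_iUnion₂.2 ⟨p, hp, Or.inr ⟨le_rfl, le_rfl⟩⟩)

/-- Lateral joins in which one side lies in `⊥_{A,B}` are trivial. -/
theorem isBiIdeal_tensorBot_union {D : Set (A × B)}
    (hD : ∀ p ∈ D, ∀ q : A × B, q.1 ≤ p.1 → q.2 ≤ p.2 → q ∈ D)
    (hsnd : ∀ a b b', (a, b) ∈ D → (a, b') ∈ D → (a, b ⊔ b') ∈ D)
    (hfst : ∀ a a' b, (a, b) ∈ D → (a', b) ∈ D → (a ⊔ a', b) ∈ D) :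
    IsBiIdeal (tensorBot A B ∪ D) := by
  refine ⟨Set.subset_union_left, ?_, fun a b b' hb hb' => ?_, fun a a' b ha ha' => ?_⟩
  · rintro p ((hp | hp) | hp) q h1 h2
    · exact Or.inl (Or.inl (le_bot_iff.1 (hp ▸ h1)))
    · exact Or.inl (Or.inr (le_bot_iff.1 (hp ▸ h2)))
    · exact Or.inr (hD p hp q h1 h2)
  · by_cases ha : a = ⊥
    · exact Or.inl (Or.inl ha)
    rcases hb with (ha' | hb0) | hb
    · exact absurd ha' ha
    · simpa [show b = ⊥ from hb0] using hb'
    rcases hb' with (ha' | hb0') | hb'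
    · exact absurd ha' ha
    · simpa [show b' = ⊥ from hb0'] using Or.inr hb
    exact Or.inr (hsnd a b b' hb hb')
  · by_cases hb : b = ⊥
    · exact Or.inl (Or.inr hb)
    rcases ha with (ha0 | hb') | ha
    · simpa [show a = ⊥ from ha0] using ha'
    · exact absurd hb' hb
    rcases ha' with (ha0' | hb') | ha'
    · simpa [show a' = ⊥ from ha0'] using Or.inr ha
    · exact absurd hb' hb
    exact Or.inr (hfst a a' b ha ha')

theorem isBiIdeal_pureTensor (a : A) (b : B) : IsBiIdeal (pureTensor a b) :=
  isBiIdeal_tensorBot_union (fun _ hp _ h1 h2 => ⟨h1.trans hp.1, h2.trans hp.2⟩)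
    (fun _ _ _ h h' => ⟨h.1, sup_le h.2 h'.2⟩) (fun _ _ _ h h' => ⟨sup_le h.1 h'.1, h.2⟩)

theorem isCompactBiIdeal_pureTensor (a : A) (b : B) : IsCompactBiIdeal (pureTensor a b) :=
  ⟨{(a, b)}, subset_antisymm
    ((isBiIdeal_biIdealGen _).pureTensor_subset
      (mem_biIdealGen_pureTensors (Finset.mem_singleton_self _)))
    (biIdealGen_pureTensors_subset (isBiIdeal_pureTensor a b) fun _ hp =>
      Finset.mem_singleton.1 hp ▸ Or.inr ⟨le_rfl, le_rfl⟩)⟩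

theorem biIdealGen_pureTensors_subset_fst_le (s : Finset (A × B)) :
    biIdealGen (⋃ p ∈ s, pureTensor p.1 p.2) ⊆ tensorBot A B ∪ {q | q.1 ≤ s.sup Prod.fst} :=
  biIdealGen_pureTensors_subset
    (isBiIdeal_tensorBot_union (fun _ hp _ h1 _ => h1.trans hp) (fun _ _ _ h _ => h)
      (fun _ _ _ h h' => sup_le h h'))
    fun _ hp => Or.inr (Finset.le_sup hp)

theorem IsBiIdeal.preimage_prodMap {J : Set (A × C)} (hJ : IsBiIdeal J) (h : SupBotHom B C) :
    IsBiIdeal (Prod.map id h ⁻¹' J) := by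
  refine ⟨?_, fun p hp q h1 h2 => hJ.2.1 _ hp _ h1 (OrderHomClass.mono h h2),
    fun a b b' hb hb' => ?_, fun a a' b ha ha' => hJ.2.2.2 _ _ _ ha ha'⟩
  · rintro q (hq | hq)
    · exact hJ.1 (Or.inl hq)
    · exact hJ.1 (Or.inr (show h q.2 = ⊥ by rw [show q.2 = ⊥ from hq, map_bot]))
  · show (a, h (b ⊔ b')) ∈ J
    rw [map_sup]
    exact hJ.2.2.1 _ _ _ hb hb'

theorem IsBiIdeal.image_prodMap (hI : IsBiIdeal I) (h : LatticeHom B C) :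
    IsBiIdeal (tensorBot A C ∪ {w | ∃ p ∈ I, w.1 ≤ p.1 ∧ w.2 ≤ h p.2}) := by
  refine isBiIdeal_tensorBot_union ?_ ?_ ?_
  · rintro w ⟨p, hp, h1, h2⟩ q hq1 hq2
    exact ⟨p, hp, hq1.trans h1, hq2.trans h2⟩
  · rintro a b b' ⟨p, hp, h1, h2⟩ ⟨p', hp', h1', h2'⟩
    refine ⟨(a, p.2 ⊔ p'.2), hI.2.2.1 _ _ _ (hI.2.1 _ hp _ h1 le_rfl)
      (hI.2.1 _ hp' _ h1' le_rfl), le_rfl, ?_⟩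
    rw [map_sup]
    exact sup_le_sup h2 h2'
  · rintro a a' b ⟨p, hp, h1, h2⟩ ⟨p', hp', h1', h2'⟩
    refine ⟨(p.1 ⊔ p'.1, p.2 ⊓ p'.2), hI.sup_inf_mem hp hp', sup_le_sup h1 h1', ?_⟩
    rw [map_inf]
    exact le_inf h2 h2'

theorem biIdealGen_pureTensors_subset_preimage [DecidableEq (A × C)] (h : SupBotHom B C)
    (s : Finset (A × B)) : biIdealGen (⋃ p ∈ s, pureTensor p.1 p.2) ⊆
      Prod.map id h ⁻¹' biIdealGen (⋃ p ∈ s.image (Prod.map id h), pureTensor p.1 p.2) :=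
  biIdealGen_pureTensors_subset ((isBiIdeal_biIdealGen _).preimage_prodMap h) fun _ hp =>
    mem_biIdealGen_pureTensors (Finset.mem_image_of_mem _ hp)

theorem biIdealGen_image_pureTensors_subset [DecidableEq (A × C)] (h : LatticeHom B C)
    (s : Finset (A × B)) : biIdealGen (⋃ p ∈ s.image (Prod.map id h), pureTensor p.1 p.2) ⊆
      tensorBot A C ∪ {w | ∃ p ∈ biIdealGen (⋃ p ∈ s, pureTensor p.1 p.2),
        w.1 ≤ p.1 ∧ w.2 ≤ h p.2} :=
  biIdealGen_pureTensors_subset ((isBiIdeal_biIdealGen _).image_prodMap h) fun _ hq => by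
    obtain ⟨p, hp, rfl⟩ := Finset.mem_image.1 hq
    exact Or.inr ⟨p, mem_biIdealGen_pureTensors hp, le_rfl, le_rfl⟩

theorem isCappedBiIdeal_of_finite_cover {ι : Type*} [Finite ι] (hI : IsBiIdeal I)
    (c : ι → A × B) (hc : ∀ i, c i ∈ I) (hcov : ∀ q ∈ I, q ∉ tensorBot A B → ∃ i, q ≤ c i) :
    IsCappedBiIdeal I := by
  classical
  refine ⟨(Set.finite_range c).toFinset, Set.ext fun q => ⟨fun hq => ?_, ?_⟩⟩
  · by_cases hq0 : q ∈ tensorBot A B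
    · exact Or.inl hq0
    obtain ⟨i, hi⟩ := hcov q hq hq0
    exact Or.inr ⟨c i, by simp, hi.1, hi.2⟩
  · rintro (hq | ⟨p, hp, h1, h2⟩)
    · exact hI.1 hq
    · obtain ⟨i, rfl⟩ : p ∈ Set.range c := (Set.Finite.mem_toFinset _).1 hp
      exact hI.2.1 _ (hc i) q h1 h2

theorem isCappedBiIdeal_of_forall_le_sup_inf' {γ : Type*} (hI : IsBiIdeal I) (G : Finset γ)
    (p : γ → A × B) (hp : ∀ g ∈ G, p g ∈ I)
    (hcov : ∀ q ∈ I, q ∉ tensorBot A B → ∃ T ⊆ G, ∃ hT : T.Nonempty,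
      q.1 ≤ T.sup (fun g => (p g).1) ∧ q.2 ≤ T.inf' hT (fun g => (p g).2)) :
    IsCappedBiIdeal I := by
  classical
  refine isCappedBiIdeal_of_finite_cover (ι := G.powerset.filter Finset.Nonempty) hI
    (fun T => (T.1.sup fun g => (p g).1, T.1.inf' (Finset.mem_filter.1 T.2).2 fun g => (p g).2))
    (fun T => hI.finset_sup_inf'_mem _ fun g hg =>
      hp g (Finset.mem_powerset.1 (Finset.mem_filter.1 T.2).1 hg)) fun q hq hq0 => ?_
  obtain ⟨T, hTG, hT, h1, h2⟩ := hcov q hq hq0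
  exact ⟨⟨T, Finset.mem_filter.2 ⟨Finset.mem_powerset.2 hTG, hT⟩⟩, h1, h2⟩

end BiIdeal

@[ext]
structure PointedLowerSet (α : Type*) [Preorder α] where
  point : α
  lowerSet : LowerSet α
  point_mem : point ∈ lowerSet

namespace PointedLowerSet

variable {α : Type*}

def principal [Preorder α] (a : α) : PointedLowerSet α :=
  ⟨a, LowerSet.Iic a, LowerSet.mem_Iic_iff.2 le_rfl⟩

section PartialOrder

variable [PartialOrder α]

instance : PartialOrder (PointedLowerSet α) :=
  PartialOrder.lift (fun x => (x.point, x.lowerSet)) fun x y h => by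
    cases x; cases y; cases h; rfl

theorem le_def {x y : PointedLowerSet α} :
    x ≤ y ↔ x.point ≤ y.point ∧ x.lowerSet ≤ y.lowerSet :=
  Iff.rfl

end PartialOrder

variable [Lattice α]

instance : Lattice (PointedLowerSet α) where
  sup x y := ⟨x.point ⊔ y.point, x.lowerSet ⊔ y.lowerSet ⊔ LowerSet.Iic (x.point ⊔ y.point),
    LowerSet.mem_sup_iff.2 (Or.inr (LowerSet.mem_Iic_iff.2 le_rfl))⟩
  inf x y := ⟨x.point ⊓ y.point, x.lowerSet ⊓ y.lowerSet,
    LowerSet.mem_inf_iff.2 ⟨x.lowerSet.lower inf_le_left x.point_mem,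
      y.lowerSet.lower inf_le_right y.point_mem⟩⟩
  le_sup_left _ _ := le_def.2 ⟨le_sup_left, le_sup_left.trans le_sup_left⟩
  le_sup_right _ _ := le_def.2 ⟨le_sup_right, le_sup_right.trans le_sup_left⟩
  sup_le _ _ z hx hy := le_def.2 ⟨sup_le hx.1 hy.1,
    sup_le (sup_le hx.2 hy.2) (LowerSet.Iic_le.2 (z.lowerSet.lower (sup_le hx.1 hy.1) z.point_mem))⟩
  inf_le_left _ _ := le_def.2 ⟨inf_le_left, inf_le_left⟩
  inf_le_right _ _ := le_def.2 ⟨inf_le_right, inf_le_right⟩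
  le_inf _ _ _ hy hz := le_def.2 ⟨le_inf hy.1 hz.1, le_inf hy.2 hz.2⟩

@[simp] theorem sup_point (x y : PointedLowerSet α) : (x ⊔ y).point = x.point ⊔ y.point := rfl

@[simp] theorem sup_lowerSet (x y : PointedLowerSet α) :
    (x ⊔ y).lowerSet = x.lowerSet ⊔ y.lowerSet ⊔ LowerSet.Iic (x.point ⊔ y.point) := rfl

def principalHom : LatticeHom α (PointedLowerSet α) where
  toFun := principal
  map_sup' a b := PointedLowerSet.ext rfl <| by
    simp only [principal, sup_lowerSet]
    exact (sup_eq_right.2 (sup_le (LowerSet.Iic_le.2 (LowerSet.mem_Iic_iff.2 le_sup_left))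
      (LowerSet.Iic_le.2 (LowerSet.mem_Iic_iff.2 le_sup_right)))).symm
  map_inf' a b := PointedLowerSet.ext rfl (LowerSet.Iic_inf a b)

variable [OrderBot α]

instance : OrderBot (PointedLowerSet α) where
  bot := principal ⊥
  bot_le x := le_def.2 ⟨bot_le, LowerSet.Iic_le.2 (x.lowerSet.lower bot_le x.point_mem)⟩

def principalSupBotHom : SupBotHom α (PointedLowerSet α) :=
  ⟨principalHom.toSupHom, rfl⟩

def univAtBot : PointedLowerSet α :=
  ⟨⊥, ⊤, LowerSet.mem_top⟩

end PointedLowerSet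

section Capping

open PointedLowerSet

variable {A L : Type*} [Lattice A] [OrderBot A] [Lattice L] [OrderBot L]

def fstBoundedBy (σ : L → A) : Set (A × PointedLowerSet L) :=
  {w | (w.1 = ⊥ ∨ w.2.point = ⊥) ∧ ∀ d ∈ w.2.lowerSet, d ≠ ⊥ → w.1 ≤ σ d}

theorem isBiIdeal_fstBoundedBy (σ : L → A) : IsBiIdeal (fstBoundedBy σ) := by
  refine ⟨?_, ?_, fun a b b' ⟨hpt, hσ⟩ ⟨hpt', hσ'⟩ => ?_, fun a a' b ⟨hpt, hσ⟩ ⟨hpt', hσ'⟩ => ?_⟩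
  · rintro w (hw | hw)
    · exact ⟨Or.inl hw, fun d _ _ => hw ▸ bot_le⟩
    · refine ⟨Or.inr (by rw [hw]; rfl), fun d hd hd0 => absurd ?_ hd0⟩
      rw [hw] at hd
      exact LowerSet.mem_Iic_iff.1 hd |> le_bot_iff.1
  · rintro w ⟨hpt, hσ⟩ q h1 h2
    exact ⟨hpt.imp (fun h : w.1 = ⊥ => le_bot_iff.1 (h ▸ h1))
        fun h : w.2.point = ⊥ => le_bot_iff.1 (h ▸ (le_def.1 h2).1),
      fun d hd hd0 => h1.trans (hσ d ((le_def.1 h2).2 hd) hd0)⟩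
  · dsimp only at hpt hpt' hσ hσ'
    have hpt'' : a = ⊥ ∨ (b ⊔ b').point = ⊥ := by
      rcases hpt with ha | hb
      · exact Or.inl ha
      rcases hpt' with ha | hb'
      · exact Or.inl ha
      exact Or.inr (by simp [hb, hb'])
    refine ⟨hpt'', fun d hd hd0 => ?_⟩
    rw [sup_lowerSet, LowerSet.mem_sup_iff, LowerSet.mem_sup_iff] at hd
    rcases hd with (hd | hd) | hd
    · exact hσ d hd hd0
    · exact hσ' d hd hd0
    · rcases hpt'' with ha | hbb
      · exact ha ▸ bot_le
      · exact absurd (le_bot_iff.1 (hbb ▸ LowerSet.mem_Iic_iff.1 hd)) hd0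
  · dsimp only at hpt hpt' hσ hσ'
    refine ⟨?_, fun d hd hd0 => sup_le (hσ d hd hd0) (hσ' d hd hd0)⟩
    rcases hpt with ha | hb
    · rcases hpt' with ha' | hb
      · exact Or.inl (by simp [ha, ha'])
      · exact Or.inr hb
    · exact Or.inr hb

theorem biIdealGen_subset_fstBoundedBy {G : Finset (A × PointedLowerSet L)} {a : A}
    {σ : L → A} (hG : ∀ g ∈ G, g ∈ pureTensor a univAtBot)
    (hσ : ∀ g ∈ G, g ∉ tensorBot A (PointedLowerSet L) → ∀ d ∈ g.2.lowerSet, g.1 ≤ σ d) :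
    biIdealGen (⋃ g ∈ G, pureTensor g.1 g.2) ⊆ fstBoundedBy σ := by
  refine biIdealGen_pureTensors_subset (isBiIdeal_fstBoundedBy σ) fun g hg => ?_
  by_cases hg0 : g ∈ tensorBot A (PointedLowerSet L)
  · exact (isBiIdeal_fstBoundedBy σ).1 hg0
  refine ⟨?_, fun d hd _ => hσ g hg hg0 d hd⟩
  rcases hG g hg with h | h
  · exact absurd h hg0
  · exact Or.inr (le_bot_iff.1 (le_def.1 h.2).1)

theorem isCappedBiIdeal_of_forall_exists_le_sup {I : Set (A × L)} (hI : IsBiIdeal I)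
    (G : Finset (A × PointedLowerSet L))
    (hdom : ∀ g ∈ G, ∃ p ∈ I, g.1 ≤ p.1 ∧ g.2 ≤ principal p.2)
    (hfst : ∀ q ∈ I, q ∉ tensorBot A L →
      ∃ T ⊆ G, (∀ g ∈ T, q.2 ∈ g.2.lowerSet) ∧ q.1 ≤ T.sup Prod.fst) :
    IsCappedBiIdeal I := by
  choose! p hpI hp using hdom
  refine isCappedBiIdeal_of_forall_le_sup_inf' hI G p hpI fun q hq hq0 => ?_
  obtain ⟨T, hTG, hTq, hq1⟩ := hfst q hq hq0
  have hT : T.Nonempty := Finset.nonempty_iff_ne_empty.2 fun hT =>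
    hq0 (Or.inl (le_bot_iff.1 (by simpa [hT] using hq1)))
  exact ⟨T, hTG, hT, hq1.trans (Finset.sup_mono_fun fun g hg => (hp g (hTG hg)).1),
    Finset.le_inf' hT _ fun g hg =>
      LowerSet.mem_Iic_iff.1 ((le_def.1 (hp g (hTG hg)).2).2 (hTq g hg))⟩

theorem isCappedBiIdeal_biIdealGen_of_tensorIsLattice
    (hA : TensorIsLattice A (PointedLowerSet L)) (s : Finset (A × L)) :
    IsCappedBiIdeal (biIdealGen (⋃ p ∈ s, pureTensor p.1 p.2)) := by
  classical
  set I' := biIdealGen (⋃ p ∈ s.image (Prod.map id principalHom), pureTensor p.1 p.2)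
  set J := pureTensor (s.sup Prod.fst) (univAtBot : PointedLowerSet L)
  obtain ⟨G, hG⟩ := hA I' J ⟨_, rfl⟩ (isCompactBiIdeal_pureTensor _ _)
  have hGmem : ∀ g ∈ G, g ∈ I' ∩ J := fun g hg => hG ▸ mem_biIdealGen_pureTensors hg
  set G' := G.filter (· ∉ tensorBot A (PointedLowerSet L))
  have hbound := biIdealGen_subset_fstBoundedBy (fun g hg => (hGmem g hg).2)
    (σ := fun d => (G'.filter (d ∈ ·.2.lowerSet)).sup Prod.fst) fun g hg hg0 d hd =>
      Finset.le_sup (s := G'.filter (d ∈ ·.2.lowerSet)) (f := Prod.fst)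
        (Finset.mem_filter.2 ⟨Finset.mem_filter.2 ⟨hg, hg0⟩, hd⟩)
  refine isCappedBiIdeal_of_forall_exists_le_sup (isBiIdeal_biIdealGen _) G'
    (fun g hg => (biIdealGen_image_pureTensors_subset principalHom s
      (hGmem g (Finset.mem_filter.1 hg).1).1).resolve_left (Finset.mem_filter.1 hg).2)
    fun q hq hq0 => ?_
  have hw : (q.1, principal q.2 ⊓ univAtBot) ∈ biIdealGen (⋃ g ∈ G, pureTensor g.1 g.2) :=
    hG ▸ show _ ∈ I' ∩ J from ⟨(isBiIdeal_biIdealGen _).2.1 _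
        (biIdealGen_pureTensors_subset_preimage principalSupBotHom s hq) _ le_rfl inf_le_left,
      Or.inr ⟨(biIdealGen_pureTensors_subset_fst_le s hq).resolve_left hq0, inf_le_right⟩⟩
  exact ⟨_, Finset.filter_subset _ _, fun g hg => (Finset.mem_filter.1 hg).2,
    (hbound hw).2 q.2 (LowerSet.mem_inf_iff.2 ⟨LowerSet.mem_Iic_iff.2 le_rfl, LowerSet.mem_top⟩)
      fun h => hq0 (Or.inr h)⟩

end Capping

/-- Theorem: every weakly amenable lattice is amenable.
If `A` is a lattice with least element such that `A ⊗ L` is a lattice for every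
lattice `L` with least element, then `A ⊗ L` is a capped tensor product for every
lattice `L` with least element. -/
theorem weakly_amenable_implies_amenable (A : Type u) [Lattice A] [OrderBot A]
    (hweak : ∀ (L : Type v) [Lattice L] [OrderBot L], TensorIsLattice A L) :
    ∀ (L : Type v) [Lattice L] [OrderBot L], IsCappedTensorProduct A L := by
  rintro L _ _ I ⟨s, rfl⟩
  exact isCappedBiIdeal_biIdealGen_of_tensorIsLattice (hweak (PointedLowerSet L)) s
end

section
/- There is no simple, locally finite lattice S with more than two elements such that every finite sublattice of S satisfies the condition (T∨) (no cycle in the join-dependency relation on join-irreducible elements). -/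
universe u v

/-- A lattice is locally finite if each of its finitely generated sublattices is
finite. -/
def IsLocallyFiniteLattice (A : Type u) [Lattice A] : Prop :=
  ∀ s : Finset A, (latticeClosure (s : Set A)).Finite
/-- A congruence of a lattice: an equivalence relation compatible with `⊓` and `⊔`. -/
def IsLatticeCongruence {L : Type u} [Lattice L] (r : L → L → Prop) : Prop :=
  Equivalence r ∧
  (∀ a b c d : L, r a b → r c d → r (a ⊓ c) (b ⊓ d)) ∧
  (∀ a b c d : L, r a b → r c d → r (a ⊔ c) (b ⊔ d))

/-- A lattice is simple if it has more than one element and its only congruences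
are equality and the total relation. -/
def IsSimpleLattice (L : Type u) [Lattice L] : Prop :=
  Nontrivial L ∧
  ∀ r : L → L → Prop, IsLatticeCongruence r →
    (∀ a b : L, r a b ↔ a = b) ∨ (∀ a b : L, r a b)

/-- The lattice `A` has a cycle for the join-dependency relation `D` on its
join-irreducible elements, where `p D q` iff `p ≠ q` and there is `x` with
`p ≤ q ⊔ x` but `p ≰ q_* ⊔ x` for the lower cover `q_*` of `q`. -/
def HasJoinDependencyCycle (A : Type u) [Lattice A] : Prop :=
  ∃ (k : ℕ) (c : ℕ → A), 1 ≤ k ∧ (∀ i, i ≤ k → SupIrred (c i)) ∧ c k = c 0 ∧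
    ∀ i, i < k → c i ≠ c (i + 1) ∧
      ∃ x : A, c i ≤ c (i + 1) ⊔ x ∧ ∀ q : A, q ⋖ c (i + 1) → ¬ c i ≤ q ⊔ x

/-- A lattice satisfies `(T∨)` if the join-dependency relation on its
join-irreducible elements has no cycle. -/
def SatisfiesTvee (A : Type u) [Lattice A] : Prop :=
  ¬ HasJoinDependencyCycle A

open Relation

section FinLat

variable {L : Type v} [Lattice L]

/-- The join-dependency relation (with an explicit witness for the lower cover). -/
def JD (p q : L) : Prop :=
  p ≠ q ∧ SupIrred p ∧ SupIrred q ∧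
    ∃ x qs : L, qs < q ∧ (∀ y, y < q → y ≤ qs) ∧ p ≤ q ⊔ x ∧ ¬ p ≤ qs ⊔ x

lemma isMin_le {y z : L} (h : IsMin y) : y ≤ z :=
  le_trans (h inf_le_left) inf_le_right

variable [Finite L]

lemma supIrred_sup'_mem (s : Finset L) (hs : s.Nonempty) (h : SupIrred (s.sup' hs id)) :
    s.sup' hs id ∈ s := by
  classical
  revert h
  induction hs using Finset.Nonempty.cons_induction with
  | singleton a => intro h; simp
  | cons a s ha hs' IH =>
    intro h
    rw [Finset.sup'_cons hs'] at h ⊢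
    rcases h.2 rfl with h1 | h1
    · rw [← h1]; exact Finset.mem_cons_self a s
    · rw [← h1] at h ⊢
      exact Finset.mem_cons.2 (Or.inr (IH h))

/-- Every sup-irreducible element of a finite lattice has a greatest strict lower bound. -/
lemma exists_star {q : L} (h : SupIrred q) : ∃ qs, qs < q ∧ ∀ y, y < q → y ≤ qs := by
  classical
  haveI := Fintype.ofFinite L
  obtain ⟨b, hb⟩ := not_isMin_iff.1 h.1
  set s : Finset L := Finset.univ.filter (· < q) with hsdef
  have hne : s.Nonempty := ⟨b, by simp [hsdef, hb]⟩
  refine ⟨s.sup' hne id, ?_, ?_⟩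
  · have hle : s.sup' hne id ≤ q := Finset.sup'_le _ _ fun y hy => by
      simp only [hsdef, Finset.mem_filter] at hy; exact hy.2.le
    rcases lt_or_eq_of_le hle with h' | h'
    · exact h'
    · exfalso
      have := supIrred_sup'_mem s hne (by rwa [h'])
      simp only [hsdef, Finset.mem_filter] at this
      rw [h'] at this; exact lt_irrefl _ this.2
  · intro y hy
    exact Finset.le_sup' id (by simp [hsdef, hy])

lemma exists_supIrred_le {v u : L} (h : ¬ v ≤ u) :
    ∃ p, SupIrred p ∧ p ≤ v ∧ ¬ p ≤ u := by
  classical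
  induction v using (wellFounded_lt (α := L)).induction with
  | _ v IH =>
  by_cases hv : SupIrred v
  · exact ⟨v, hv, le_rfl, h⟩
  · rcases not_and_or.1 hv with hmin | hdec
    · exact absurd (isMin_le (not_not.1 hmin)) h
    · push_neg at hdec
      obtain ⟨s, t, hst, hs, ht⟩ := hdec
      have hs' : s < v := lt_of_le_of_ne (hst ▸ le_sup_left) hs
      have ht' : t < v := lt_of_le_of_ne (hst ▸ le_sup_right) ht
      by_cases hsu : s ≤ u
      · have htu : ¬ t ≤ u := fun htu => h (hst ▸ sup_le hsu htu)
        obtain ⟨p, h1, h2, h3⟩ := IH t ht' htu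
        exact ⟨p, h1, h2.trans ht'.le, h3⟩
      · obtain ⟨p, h1, h2, h3⟩ := IH s hs' hsu
        exact ⟨p, h1, h2.trans hs'.le, h3⟩

/-- Key lemma: one-sided join substitution for D-down-closed sets. -/
lemma lemA (X : Set L) (hX : ∀ p q, JD p q → q ∈ X → p ∈ X) (a b : L)
    (H : ∀ r, SupIrred r → r ∉ X → r ≤ a → r ≤ b) :
    ∀ y, y ≤ a → ∀ z p, SupIrred p → p ∉ X → p ≤ y ⊔ z → p ≤ b ⊔ z := by
  classical
  intro y
  induction y using (wellFounded_lt (α := L)).induction with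
  | _ y IH =>
  intro hya z p hp hpX hpyz
  by_cases hirr : SupIrred y
  · obtain ⟨qs, hqslt, hqsmax⟩ := exists_star hirr
    by_cases hq : p ≤ qs ⊔ z
    · exact IH qs hqslt (hqslt.le.trans hya) z p hp hpX hq
    · by_cases hpy : p = y
      · exact le_trans (H p hp hpX (hpy ▸ hya)) le_sup_left
      · have hjd : JD p y := ⟨hpy, hp, hirr, z, qs, hqslt, hqsmax, hpyz, hq⟩
        have hyX : y ∉ X := fun hyX => hpX (hX p y hjd hyX)
        have hyb : y ≤ b := H y hirr hyX hya
        exact hpyz.trans (sup_le_sup_right hyb z)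
  · rcases not_and_or.1 hirr with hmin | hdec
    · have : y ≤ z := isMin_le (not_not.1 hmin)
      exact le_trans (hpyz.trans (sup_le this le_rfl)) le_sup_right
    · push_neg at hdec
      obtain ⟨s, t, hst, hs, ht⟩ := hdec
      have hs' : s < y := lt_of_le_of_ne (hst ▸ le_sup_left) hs
      have ht' : t < y := lt_of_le_of_ne (hst ▸ le_sup_right) ht
      have h1 : p ≤ s ⊔ (t ⊔ z) := by
        rw [← sup_assoc, hst]; exact hpyz
      have h2 : p ≤ b ⊔ (t ⊔ z) := IH s hs' (hs'.le.trans hya) _ p hp hpX h1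
      have h3 : p ≤ t ⊔ (b ⊔ z) := by
        calc p ≤ b ⊔ (t ⊔ z) := h2
        _ = t ⊔ (b ⊔ z) := by rw [← sup_assoc, ← sup_assoc, sup_comm b t]
      have h4 : p ≤ b ⊔ (b ⊔ z) := IH t ht' (ht'.le.trans hya) _ p hp hpX h3
      rwa [← sup_assoc, sup_idem] at h4

/-- The relation determined by a D-down-closed set of sup-irreducibles is a congruence. -/
lemma theta_cong (X : Set L) (hX : ∀ p q, JD p q → q ∈ X → p ∈ X) :
    IsLatticeCongruence (fun a b : L => ∀ p : L, SupIrred p → p ∉ X → (p ≤ a ↔ p ≤ b)) := by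
  constructor
  · exact ⟨fun a p _ _ => Iff.rfl, fun h p hp hpX => (h p hp hpX).symm,
      fun h1 h2 p hp hpX => (h1 p hp hpX).trans (h2 p hp hpX)⟩
  constructor
  · intro a b c d hab hcd p hp hpX
    simp only [le_inf_iff]
    rw [hab p hp hpX, hcd p hp hpX]
  · intro a b c d hab hcd p hp hpX
    constructor
    · intro h
      have h1 : p ≤ b ⊔ c :=
        lemA X hX a b (fun r hr hrX hra => (hab r hr hrX).1 hra) a le_rfl c p hp hpX h
      have h2 : p ≤ d ⊔ b :=
        lemA X hX c d (fun r hr hrX hrc => (hcd r hr hrX).1 hrc) c le_rfl b p hp hpX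
          (by rwa [sup_comm] at h1)
      rwa [sup_comm] at h2
    · intro h
      have h1 : p ≤ a ⊔ d :=
        lemA X hX b a (fun r hr hrX hrb => (hab r hr hrX).2 hrb) b le_rfl d p hp hpX h
      have h2 : p ≤ c ⊔ a :=
        lemA X hX d c (fun r hr hrX hrd => (hcd r hr hrX).2 hrd) d le_rfl a p hp hpX
          (by rwa [sup_comm] at h1)
      rwa [sup_comm] at h2

/-- The heart of the argument: in a finite lattice with `u < v < w` such that every
congruence collapses `(u,v)` iff it collapses `(v,w)`, the relation `JD` has a cycle. -/
lemma exists_JD_cycle {u v w : L} (huv : u < v) (hvw : v < w)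
    (h1 : ∀ ρ : L → L → Prop, IsLatticeCongruence ρ → ρ u v → ρ v w)
    (h2 : ∀ ρ : L → L → Prop, IsLatticeCongruence ρ → ρ v w → ρ u v) :
    ∃ z : L, Relation.TransGen JD z z := by
  classical
  set P : Set L := {p | SupIrred p ∧ p ≤ v ∧ ¬ p ≤ u} with hP
  set Q : Set L := {q | SupIrred q ∧ q ≤ w ∧ ¬ q ≤ v} with hQ
  set X : Set L := {r | ∃ q ∈ Q, ReflTransGen JD r q} with hXdef
  set Y : Set L := {r | ∃ p ∈ P, ReflTransGen JD r p} with hYdef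
  have hX : ∀ p q, JD p q → q ∈ X → p ∈ X := by
    rintro p q hpq ⟨q', hq', hrt⟩
    exact ⟨q', hq', ReflTransGen.head hpq hrt⟩
  have hY : ∀ p q, JD p q → q ∈ Y → p ∈ Y := by
    rintro p q hpq ⟨q', hq', hrt⟩
    exact ⟨q', hq', ReflTransGen.head hpq hrt⟩
  -- θ_X collapses (v, w), hence (u, v); so each element of P reaches Q
  have hθX : ∀ p : L, SupIrred p → p ∉ X → (p ≤ u ↔ p ≤ v) := by
    have hcol : ∀ p : L, SupIrred p → p ∉ X → (p ≤ v ↔ p ≤ w) := by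
      intro p hp hpX
      constructor
      · exact fun h => h.trans hvw.le
      · intro h
        by_contra hpv
        exact hpX ⟨p, ⟨hp, h, hpv⟩, ReflTransGen.refl⟩
    exact h2 _ (theta_cong X hX) hcol
  have hθY : ∀ q : L, SupIrred q → q ∉ Y → (q ≤ v ↔ q ≤ w) := by
    have hcol : ∀ q : L, SupIrred q → q ∉ Y → (q ≤ u ↔ q ≤ v) := by
      intro q hq hqY
      constructor
      · exact fun h => h.trans huv.le
      · intro h
        by_contra hqu
        exact hqY ⟨q, ⟨hq, h, hqu⟩, ReflTransGen.refl⟩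
    exact h1 _ (theta_cong Y hY) hcol
  have hPX : ∀ p ∈ P, ∃ q ∈ Q, TransGen JD p q := by
    rintro p ⟨hp, hpv, hpu⟩
    have hpX : p ∈ X := by
      by_contra hpX
      exact hpu ((hθX p hp hpX).2 hpv)
    obtain ⟨q, hq, hrt⟩ := hpX
    rcases reflTransGen_iff_eq_or_transGen.1 hrt with rfl | htg
    · exact absurd hpv hq.2.2
    · exact ⟨q, hq, htg⟩
  have hQY : ∀ q ∈ Q, ∃ p ∈ P, TransGen JD q p := by
    rintro q ⟨hq, hqw, hqv⟩
    have hqY : q ∈ Y := by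
      by_contra hqY
      exact hqv ((hθY q hq hqY).2 hqw)
    obtain ⟨p, hp, hrt⟩ := hqY
    rcases reflTransGen_iff_eq_or_transGen.1 hrt with rfl | htg
    · exact absurd hp.2.1 hqv
    · exact ⟨p, hp, htg⟩
  -- iterate
  have key : ∀ p ∈ P, ∃ p' ∈ P, TransGen JD p p' := by
    intro p hp
    obtain ⟨q, hq, h1'⟩ := hPX p hp
    obtain ⟨p', hp', h2'⟩ := hQY q hq
    exact ⟨p', hp', h1'.trans h2'⟩
  obtain ⟨p0, hp0⟩ : ∃ p, p ∈ P := by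
    obtain ⟨p, h1', h2', h3'⟩ := exists_supIrred_le (not_le_of_gt huv)
    exact ⟨p, h1', h2', h3'⟩
  choose f hf1 hf2 using key
  let s : ℕ → {x : L // x ∈ P} := fun n =>
    Nat.rec ⟨p0, hp0⟩ (fun _ prev => ⟨f prev.1 prev.2, hf1 prev.1 prev.2⟩) n
  have hstep : ∀ n, TransGen JD (s n).1 (s (n + 1)).1 := fun n => hf2 (s n).1 (s n).2
  have hchain : ∀ m k, TransGen JD (s m).1 (s (m + k + 1)).1 := by
    intro m k
    induction k with
    | zero => exact hstep m
    | succ k IH => exact IH.trans (hstep (m + k + 1))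
  obtain ⟨m, n, hmn, heq⟩ := Finite.exists_ne_map_eq_of_infinite s
  rcases hmn.lt_or_gt with h | h
  · obtain ⟨k, rfl⟩ : ∃ k, n = m + k + 1 := ⟨n - m - 1, by omega⟩
    exact ⟨(s m).1, by have := hchain m k; rwa [← heq] at this⟩
  · obtain ⟨k, rfl⟩ : ∃ k, m = n + k + 1 := ⟨m - n - 1, by omega⟩
    exact ⟨(s n).1, by have := hchain n k; rwa [heq] at this⟩

lemma path_of_transGen {r : L → L → Prop} {a b : L} (h : TransGen r a b) :
    ∃ (k : ℕ) (c : ℕ → L), 1 ≤ k ∧ c 0 = a ∧ c k = b ∧ ∀ i, i < k → r (c i) (c (i + 1)) := by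
  classical
  induction h with
  | single hab =>
    refine ⟨1, fun i => if i = 0 then a else _, le_rfl, if_pos rfl, if_neg one_ne_zero, ?_⟩
    intro i hi
    interval_cases i
    simp only [if_pos rfl, if_neg one_ne_zero]
    exact hab
  | tail hab hbc IH =>
    obtain ⟨k, c, hk, h0, hkb, hst⟩ := IH
    refine ⟨k + 1, fun i => if i ≤ k then c i else _, le_trans hk (Nat.le_succ k),
      by simp only []; rw [if_pos (Nat.zero_le k)]; exact h0, if_neg (by omega), ?_⟩
    intro i hi
    rcases Nat.lt_or_ge i k with h' | h'
    · simp only [if_pos (Nat.le_of_lt h'), if_pos (Nat.succ_le_of_lt h')]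
      exact hst i h'
    · have : i = k := by omega
      subst this
      simp only [if_pos le_rfl, if_neg (by omega : ¬ i + 1 ≤ i), hkb]
      exact hbc

lemma hasCycle_of_JD_cycle {z : L} (h : TransGen JD z z) : HasJoinDependencyCycle L := by
  obtain ⟨k, c, hk, h0, hkb, hst⟩ := path_of_transGen h
  refine ⟨k, c, hk, ?_, by rw [hkb, h0], ?_⟩
  · intro i hi
    rcases Nat.lt_or_ge i k with h' | h'
    · exact (hst i h').2.1
    · have : i = k := le_antisymm hi h'
      subst this
      rw [hkb, ← h0]
      exact (hst 0 hk).2.1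
  · intro i hi
    obtain ⟨hne, hpirr, hqirr, x, qs, hqslt, hqsmax, hle, hnle⟩ := hst i hi
    refine ⟨hne, x, hle, ?_⟩
    intro q' hcov
    have hq'qs : q' = qs := by
      have h1 : q' ≤ qs := hqsmax q' hcov.1
      rcases lt_or_eq_of_le h1 with h' | h'
      · exact absurd hqslt (hcov.2 h')
      · exact h'
    rw [hq'qs]
    exact hnle

end FinLat

section Glue

variable {S : Type u} [Lattice S]

/-- A finite sublattice containing a given finite set. -/
lemma exists_finite_sublattice (hlf : IsLocallyFiniteLattice S) (A : Set S) (hA : A.Finite) :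
    ∃ t : Sublattice S, (t : Set S).Finite ∧ A ⊆ (t : Set S) := by
  classical
  refine ⟨⟨latticeClosure A, isSublattice_latticeClosure.1, isSublattice_latticeClosure.2⟩,
    ?_, subset_latticeClosure⟩
  have : (latticeClosure (hA.toFinset : Set S)).Finite := hlf hA.toFinset
  rwa [hA.coe_toFinset] at this

/-- Transfer of a conditional congruence implication along a sublattice inclusion. -/
lemma transfer {t t' : Sublattice S} (hsub : (t : Set S) ⊆ (t' : Set S))
    {a b c d : S} (ha : a ∈ t) (hb : b ∈ t) (hc : c ∈ t) (hd : d ∈ t)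
    (H : ∀ ρ : ↥t → ↥t → Prop, IsLatticeCongruence ρ → ρ ⟨a, ha⟩ ⟨b, hb⟩ → ρ ⟨c, hc⟩ ⟨d, hd⟩) :
    ∀ ρ' : ↥t' → ↥t' → Prop, IsLatticeCongruence ρ' →
      ρ' ⟨a, hsub ha⟩ ⟨b, hsub hb⟩ → ρ' ⟨c, hsub hc⟩ ⟨d, hsub hd⟩ := by
  intro ρ' hρ' hab
  let ι : ↥t → ↥t' := fun x => ⟨x.1, hsub x.2⟩
  have key : IsLatticeCongruence (fun x y : ↥t => ρ' (ι x) (ι y)) := by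
    refine ⟨⟨fun x => hρ'.1.refl _, fun h => hρ'.1.symm h, fun h1 h2 => hρ'.1.trans h1 h2⟩,
      ?_, ?_⟩
    · intro a' b' c' d' h1 h2
      have := hρ'.2.1 _ _ _ _ h1 h2
      have heq1 : ι (a' ⊓ c') = ι a' ⊓ ι c' := rfl
      have heq2 : ι (b' ⊓ d') = ι b' ⊓ ι d' := rfl
      rw [heq1, heq2]; exact this
    · intro a' b' c' d' h1 h2
      have := hρ'.2.2 _ _ _ _ h1 h2
      have heq1 : ι (a' ⊔ c') = ι a' ⊔ ι c' := rfl
      have heq2 : ι (b' ⊔ d') = ι b' ⊔ ι d' := rfl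
      rw [heq1, heq2]; exact this
  exact H _ key hab

/-- The "congruence generated by `(u0, v0)`", finitarily. -/
def rGen (u0 v0 : S) (x y : S) : Prop :=
  ∃ (t : Sublattice S) (_ : (t : Set S).Finite) (hu : u0 ∈ t) (hv : v0 ∈ t)
    (hx : x ∈ t) (hy : y ∈ t),
    ∀ ρ : ↥t → ↥t → Prop, IsLatticeCongruence ρ → ρ ⟨u0, hu⟩ ⟨v0, hv⟩ → ρ ⟨x, hx⟩ ⟨y, hy⟩

lemma rGen_cong (hlf : IsLocallyFiniteLattice S) (u0 v0 : S) :
    IsLatticeCongruence (rGen u0 v0) := by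
  classical
  have refl : ∀ x : S, rGen u0 v0 x x := by
    intro x
    obtain ⟨t, ht, hsub⟩ := exists_finite_sublattice hlf {u0, v0, x} (Set.toFinite _)
    exact ⟨t, ht, hsub (by simp), hsub (by simp), hsub (by simp), hsub (by simp),
      fun ρ hρ _ => hρ.1.refl _⟩
  have symm : ∀ {x y : S}, rGen u0 v0 x y → rGen u0 v0 y x := by
    rintro x y ⟨t, ht, hu, hv, hx, hy, H⟩
    exact ⟨t, ht, hu, hv, hy, hx, fun ρ hρ huv => hρ.1.symm (H ρ hρ huv)⟩
  refine ⟨⟨refl, symm, ?_⟩, ?_, ?_⟩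
  · rintro x y z ⟨t1, ht1, hu1, hv1, hx1, hy1, H1⟩ ⟨t2, ht2, hu2, hv2, hy2, hz2, H2⟩
    obtain ⟨t, ht, hsub⟩ := exists_finite_sublattice hlf ((t1 : Set S) ∪ (t2 : Set S))
      (ht1.union ht2)
    have hs1 : (t1 : Set S) ⊆ (t : Set S) := fun a ha => hsub (Or.inl ha)
    have hs2 : (t2 : Set S) ⊆ (t : Set S) := fun a ha => hsub (Or.inr ha)
    refine ⟨t, ht, hs1 hu1, hs1 hv1, hs1 hx1, hs2 hz2, fun ρ hρ huv => ?_⟩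
    have hxy := transfer hs1 hu1 hv1 hx1 hy1 H1 ρ hρ huv
    have hyz := transfer hs2 hu2 hv2 hy2 hz2 H2 ρ hρ huv
    exact hρ.1.trans hxy hyz
  · rintro a b c d ⟨t1, ht1, hu1, hv1, ha1, hb1, H1⟩ ⟨t2, ht2, hu2, hv2, hc2, hd2, H2⟩
    obtain ⟨t, ht, hsub⟩ := exists_finite_sublattice hlf ((t1 : Set S) ∪ (t2 : Set S))
      (ht1.union ht2)
    have hs1 : (t1 : Set S) ⊆ (t : Set S) := fun a ha => hsub (Or.inl ha)
    have hs2 : (t2 : Set S) ⊆ (t : Set S) := fun a ha => hsub (Or.inr ha)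
    have hmac : a ⊓ c ∈ t := t.infClosed' (hs1 ha1) (hs2 hc2)
    have hmbd : b ⊓ d ∈ t := t.infClosed' (hs1 hb1) (hs2 hd2)
    refine ⟨t, ht, hs1 hu1, hs1 hv1, hmac, hmbd, fun ρ hρ huv => ?_⟩
    have hab := transfer hs1 hu1 hv1 ha1 hb1 H1 ρ hρ huv
    have hcd := transfer hs2 hu2 hv2 hc2 hd2 H2 ρ hρ huv
    exact hρ.2.1 _ _ _ _ hab hcd
  · rintro a b c d ⟨t1, ht1, hu1, hv1, ha1, hb1, H1⟩ ⟨t2, ht2, hu2, hv2, hc2, hd2, H2⟩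
    obtain ⟨t, ht, hsub⟩ := exists_finite_sublattice hlf ((t1 : Set S) ∪ (t2 : Set S))
      (ht1.union ht2)
    have hs1 : (t1 : Set S) ⊆ (t : Set S) := fun a ha => hsub (Or.inl ha)
    have hs2 : (t2 : Set S) ⊆ (t : Set S) := fun a ha => hsub (Or.inr ha)
    have hmac : a ⊔ c ∈ t := t.supClosed' (hs1 ha1) (hs2 hc2)
    have hmbd : b ⊔ d ∈ t := t.supClosed' (hs1 hb1) (hs2 hd2)
    refine ⟨t, ht, hs1 hu1, hs1 hv1, hmac, hmbd, fun ρ hρ huv => ?_⟩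
    have hab := transfer hs1 hu1 hv1 ha1 hb1 H1 ρ hρ huv
    have hcd := transfer hs2 hu2 hv2 hc2 hd2 H2 ρ hρ huv
    exact hρ.2.2 _ _ _ _ hab hcd

lemma rGen_self (hlf : IsLocallyFiniteLattice S) (u0 v0 : S) : rGen u0 v0 u0 v0 := by
  obtain ⟨t, ht, hsub⟩ := exists_finite_sublattice hlf {u0, v0} (Set.toFinite _)
  exact ⟨t, ht, hsub (by simp), hsub (by simp), hsub (by simp), hsub (by simp),
    fun ρ _ huv => huv⟩

lemma exists_chain3 {a b c : S} (hab : a ≠ b) (hac : a ≠ c) (hbc : b ≠ c) :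
    ∃ u v w : S, u < v ∧ v < w := by
  classical
  have incomp : ∀ x y : S, ¬ x ≤ y → ¬ y ≤ x → ∃ u v w : S, u < v ∧ v < w := by
    intro x y h1 h2
    exact ⟨x ⊓ y, x, x ⊔ y, inf_lt_left.2 h1, left_lt_sup.2 h2⟩
  have main : ∀ x y z : S, x < y → z ≠ x → z ≠ y → ∃ u v w : S, u < v ∧ v < w := by
    intro x y z hxy hzx hzy
    by_cases h1 : z ≤ x
    · exact ⟨z, x, y, lt_of_le_of_ne h1 hzx, hxy⟩
    by_cases h2 : x ≤ z
    · by_cases h3 : z ≤ y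
      · exact ⟨x, z, y, lt_of_le_of_ne h2 (Ne.symm hzx), lt_of_le_of_ne h3 hzy⟩
      by_cases h4 : y ≤ z
      · exact ⟨x, y, z, hxy, lt_of_le_of_ne h4 (Ne.symm hzy)⟩
      · exact incomp z y h3 h4
    · exact incomp z x h1 h2
  by_cases h1 : a ≤ b
  · by_cases h2 : b ≤ a
    · exact absurd (le_antisymm h1 h2) hab
    · exact main a b c (lt_of_le_not_ge h1 h2) (Ne.symm hac) (Ne.symm hbc)
  · by_cases h2 : b ≤ a
    · exact main b a c (lt_of_le_not_ge h2 h1) (Ne.symm hbc) (Ne.symm hac)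
    · exact incomp a b h1 h2

end Glue


/-- there is no simple, locally finite lattice with more than two
elements all of whose finite sublattices satisfy `(T∨)`. -/
theorem no_simple_locally_finite_with_Tvee (S : Type u) [Lattice S]
    (hsimple : IsSimpleLattice S) (hlf : IsLocallyFiniteLattice S)
    (hcard : ∃ a b c : S, a ≠ b ∧ a ≠ c ∧ b ≠ c) :
    ¬ ∀ t : Sublattice S, (t : Set S).Finite → SatisfiesTvee ↥t := by
  intro hT
  obtain ⟨a, b, c, hab, hac, hbc⟩ := hcard
  obtain ⟨u, v, w, huv, hvw⟩ := exists_chain3 hab hac hbc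
  -- congruence generated by (u, v) is total
  have h1tot : ∀ x y : S, rGen u v x y := by
    rcases hsimple.2 (rGen u v) (rGen_cong hlf u v) with h | h
    · exact absurd ((h u v).1 (rGen_self hlf u v)) huv.ne
    · exact h
  have h2tot : ∀ x y : S, rGen v w x y := by
    rcases hsimple.2 (rGen v w) (rGen_cong hlf v w) with h | h
    · exact absurd ((h v w).1 (rGen_self hlf v w)) hvw.ne
    · exact h
  obtain ⟨t1, ht1, hu1, hv1, hv1', hw1, H1⟩ := h1tot v w
  obtain ⟨t2, ht2, hv2, hw2, hu2, hv2', H2⟩ := h2tot u v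
  obtain ⟨t, ht, hsub⟩ := exists_finite_sublattice hlf ((t1 : Set S) ∪ (t2 : Set S))
    (ht1.union ht2)
  have hs1 : (t1 : Set S) ⊆ (t : Set S) := fun a ha => hsub (Or.inl ha)
  have hs2 : (t2 : Set S) ⊆ (t : Set S) := fun a ha => hsub (Or.inr ha)
  haveI : Finite ↥t := ht.to_subtype
  set u' : ↥t := ⟨u, hs1 hu1⟩
  set v' : ↥t := ⟨v, hs1 hv1⟩
  set w' : ↥t := ⟨w, hs1 hw1⟩
  have huv' : u' < v' := Subtype.coe_lt_coe.1 huv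
  have hvw' : v' < w' := Subtype.coe_lt_coe.1 hvw
  have hc1 : ∀ ρ : ↥t → ↥t → Prop, IsLatticeCongruence ρ → ρ u' v' → ρ v' w' :=
    transfer hs1 hu1 hv1 hv1' hw1 H1
  have hc2 : ∀ ρ : ↥t → ↥t → Prop, IsLatticeCongruence ρ → ρ v' w' → ρ u' v' :=
    transfer hs2 hv2 hw2 hu2 hv2' H2
  obtain ⟨z, hz⟩ := exists_JD_cycle huv' hvw' hc1 hc2
  exact hT t ht (hasCycle_of_JD_cycle hz)
end

section
/- The set S of all bounded (i.e., finite) intervals of the chain ℤ of integers, including the empty interval, ordered by inclusion, is a lattice with least element ∅ (with meet given by intersection and join of two intervals given by the smallest interval containing both), and this lattice is infinite, locally finite, join-semidistributive, atomistic, and simple. -/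
universe u v

/-- A lattice is join-semidistributive if `x ∨ z = y ∨ z` implies
`x ∨ z = (x ∧ y) ∨ z`. -/
def IsJoinSemidistributive (L : Type u) [Lattice L] : Prop :=
  ∀ x y z : L, x ⊔ z = y ⊔ z → x ⊔ z = (x ⊓ y) ⊔ z

/-- A lattice with least element is atomistic if every element is the join of
finitely many atoms. -/
def IsAtomisticLattice (L : Type u) [Lattice L] [OrderBot L] : Prop :=
  ∀ x : L, ∃ s : Finset L, (∀ a ∈ s, IsAtom a) ∧ x = s.sup id

/-- The bounded intervals of the chain `ℤ`, including the empty one. -/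
def BddInterval : Type :=
  {s : Set ℤ // s = ∅ ∨ ∃ m n : ℤ, m ≤ n ∧ s = Set.Icc m n}

/-- The conjunction of properties asserted of the lattice of bounded intervals of
`ℤ` in Statement 8: the order is inclusion, the least element is `∅`, the meet is
intersection, the join of two intervals is the smallest interval containing both,
and the lattice is infinite, locally finite, join-semidistributive, atomistic and
simple. -/
def Stmt8Body [Lattice BddInterval] [OrderBot BddInterval] : Prop :=
  (∀ x y : BddInterval, x ≤ y ↔ x.1 ⊆ y.1) ∧
  ((⊥ : BddInterval).1 = ∅) ∧
  (∀ x y : BddInterval, (x ⊓ y).1 = x.1 ∩ y.1) ∧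
  (∀ x y : BddInterval, x.1 ∪ y.1 ⊆ (x ⊔ y).1 ∧
    ∀ z : BddInterval, x.1 ∪ y.1 ⊆ z.1 → (x ⊔ y).1 ⊆ z.1) ∧
  Infinite BddInterval ∧
  IsLocallyFiniteLattice BddInterval ∧
  IsJoinSemidistributive BddInterval ∧
  IsAtomisticLattice BddInterval ∧
  IsSimpleLattice BddInterval

namespace BddIntervalAux
open Classical in
noncomputable def hull (s : Set ℤ) : Set ℤ :=
  if s.Nonempty then Set.Icc (sInf s) (sSup s) else ∅

lemma hull_of_nonempty {s : Set ℤ} (h : s.Nonempty) :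
    hull s = Set.Icc (sInf s) (sSup s) := by rw [hull, if_pos h]

lemma hull_of_empty {s : Set ℤ} (h : ¬ s.Nonempty) : hull s = ∅ := by rw [hull, if_neg h]

lemma subset_hull {s : Set ℤ} (hb : BddBelow s) (ha : BddAbove s) : s ⊆ hull s := by
  intro a has
  rw [hull_of_nonempty ⟨a, has⟩]
  exact ⟨csInf_le hb has, le_csSup ha has⟩

lemma hull_subset_Icc {s : Set ℤ} {m n : ℤ} (hs : s ⊆ Set.Icc m n) :
    hull s ⊆ Set.Icc m n := by
  by_cases h : s.Nonempty
  · rw [hull_of_nonempty h]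
    intro a ha
    exact ⟨le_trans (le_csInf h fun b hb => (hs hb).1) ha.1,
      le_trans ha.2 (csSup_le h fun b hb => (hs hb).2)⟩
  · rw [hull_of_empty h]; simp

lemma hull_mem {s : Set ℤ} (hb : BddBelow s) (ha : BddAbove s) :
    hull s = ∅ ∨ ∃ m n : ℤ, m ≤ n ∧ hull s = Set.Icc m n := by
  by_cases h : s.Nonempty
  · obtain ⟨a, has⟩ := h
    exact Or.inr ⟨sInf s, sSup s, le_trans (csInf_le hb has) (le_csSup ha has),
      hull_of_nonempty ⟨a, has⟩⟩
  · exact Or.inl (hull_of_empty h)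

lemma hull_union_Icc {a b c d : ℤ} (hab : a ≤ b) (hcd : c ≤ d) :
    hull (Set.Icc a b ∪ Set.Icc c d) = Set.Icc (min a c) (max b d) := by
  have hne : (Set.Icc a b ∪ Set.Icc c d).Nonempty := ⟨a, Or.inl ⟨le_refl a, hab⟩⟩
  rw [hull_of_nonempty hne]
  have h1 : sInf (Set.Icc a b ∪ Set.Icc c d) = min a c := by
    apply IsLeast.csInf_eq
    constructor
    · rcases le_total a c with h | h
      · rw [min_eq_left h]; exact Or.inl ⟨le_refl a, hab⟩
      · rw [min_eq_right h]; exact Or.inr ⟨le_refl c, hcd⟩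
    · rintro x (⟨h1, _⟩ | ⟨h1, _⟩)
      · exact le_trans (min_le_left _ _) h1
      · exact le_trans (min_le_right _ _) h1
  have h2 : sSup (Set.Icc a b ∪ Set.Icc c d) = max b d := by
    apply IsGreatest.csSup_eq
    constructor
    · rcases le_total b d with h | h
      · rw [max_eq_right h]; exact Or.inr ⟨hcd, le_refl d⟩
      · rw [max_eq_left h]; exact Or.inl ⟨hab, le_refl b⟩
    · rintro x (⟨_, h1⟩ | ⟨_, h1⟩)
      · exact le_trans h1 (le_max_left _ _)
      · exact le_trans h1 (le_max_right _ _)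
  rw [h1, h2]

lemma bddBelow_val (x : BddInterval) : BddBelow x.1 := by
  rcases x.2 with h | ⟨m, n, _, h⟩ <;> rw [h]
  · exact bddBelow_empty
  · exact bddBelow_Icc

lemma bddAbove_val (x : BddInterval) : BddAbove x.1 := by
  rcases x.2 with h | ⟨m, n, _, h⟩ <;> rw [h]
  · exact bddAbove_empty
  · exact bddAbove_Icc

lemma inter_mem (x y : BddInterval) :
    x.1 ∩ y.1 = ∅ ∨ ∃ m n : ℤ, m ≤ n ∧ x.1 ∩ y.1 = Set.Icc m n := by
  rcases x.2 with hx | ⟨a, b, hab, hx⟩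
  · left; rw [hx]; simp
  rcases y.2 with hy | ⟨c, d, hcd, hy⟩
  · left; rw [hy]; simp
  rw [hx, hy, Set.Icc_inter_Icc]
  by_cases h : (a ⊔ c : ℤ) ≤ b ⊓ d
  · exact Or.inr ⟨_, _, h, rfl⟩
  · left; exact Set.Icc_eq_empty h

noncomputable instance instLatticeBI : Lattice BddInterval where
  le x y := x.1 ⊆ y.1
  le_refl x := subset_rfl
  le_trans x y z := Set.Subset.trans
  le_antisymm x y h1 h2 := Subtype.ext (Set.Subset.antisymm h1 h2)
  sup x y := ⟨hull (x.1 ∪ y.1),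
    hull_mem ((bddBelow_val x).union (bddBelow_val y)) ((bddAbove_val x).union (bddAbove_val y))⟩
  le_sup_left x y := Set.Subset.trans Set.subset_union_left
    (subset_hull ((bddBelow_val x).union (bddBelow_val y))
      ((bddAbove_val x).union (bddAbove_val y)))
  le_sup_right x y := Set.Subset.trans Set.subset_union_right
    (subset_hull ((bddBelow_val x).union (bddBelow_val y))
      ((bddAbove_val x).union (bddAbove_val y)))
  sup_le x y z hx hy := by
    have hu : x.1 ∪ y.1 ⊆ z.1 := Set.union_subset hx hy
    show hull (x.1 ∪ y.1) ⊆ z.1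
    rcases z.2 with hz | ⟨m, n, _, hz⟩
    · rw [hz] at hu
      rw [Set.subset_empty_iff] at hu
      rw [hu, hull_of_empty (by simp), hz]
    · rw [hz] at hu ⊢
      exact hull_subset_Icc hu
  inf x y := ⟨x.1 ∩ y.1, inter_mem x y⟩
  inf_le_left x y := Set.inter_subset_left
  inf_le_right x y := Set.inter_subset_right
  le_inf x y z hx hy := Set.subset_inter hx hy

noncomputable instance instBotBI : OrderBot BddInterval where
  bot := ⟨∅, Or.inl rfl⟩
  bot_le x := Set.empty_subset _

lemma le_iff_subset {x y : BddInterval} : x ≤ y ↔ x.1 ⊆ y.1 := Iff.rfl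
lemma sup_val (x y : BddInterval) : (x ⊔ y).1 = hull (x.1 ∪ y.1) := rfl
lemma inf_val (x y : BddInterval) : (x ⊓ y).1 = x.1 ∩ y.1 := rfl
lemma bot_val : (⊥ : BddInterval).1 = ∅ := rfl

noncomputable def sing (k : ℤ) : BddInterval := ⟨Set.Icc k k, Or.inr ⟨k, k, le_refl k, rfl⟩⟩

lemma sup_Icc {x y : BddInterval} {a b c d : ℤ} (hab : a ≤ b) (hcd : c ≤ d)
    (hx : x.1 = Set.Icc a b) (hy : y.1 = Set.Icc c d) :
    (x ⊔ y).1 = Set.Icc (min a c) (max b d) := by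
  rw [sup_val, hx, hy, hull_union_Icc hab hcd]


lemma sing_sup_sing {m n : ℤ} (hmn : m ≤ n) : (sing m ⊔ sing n).1 = Set.Icc m n := by
  rw [sup_Icc (le_refl m) (le_refl n) rfl rfl, min_eq_left hmn, max_eq_right hmn]

lemma sing_injective : Function.Injective sing := by
  intro a b h
  have h2 : (sing a).1 = (sing b).1 := congrArg Subtype.val h
  have h3 : a ∈ Set.Icc b b := by
    have : a ∈ (sing a).1 := ⟨le_refl a, le_refl a⟩
    rw [h2] at this
    exact this
  exact le_antisymm h3.2 h3.1

lemma prop_infinite : Infinite BddInterval := Infinite.of_injective sing sing_injective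

lemma isAtom_sing (k : ℤ) : IsAtom (sing k) := by
  constructor
  · intro h
    have h2 : (sing k).1 = (⊥ : BddInterval).1 := congrArg Subtype.val h
    have : k ∈ (∅ : Set ℤ) := by rw [← bot_val, ← h2]; exact ⟨le_refl k, le_refl k⟩
    exact this
  · intro b hb
    rcases b.2 with hbv | ⟨m, n, hmn, hbv⟩
    · exact Subtype.ext hbv
    · exfalso
      have hsub : b.1 ⊆ Set.Icc k k := hb.le
      have hm : m ∈ Set.Icc k k := hsub (by rw [hbv]; exact ⟨le_refl m, hmn⟩)
      have hn : n ∈ Set.Icc k k := hsub (by rw [hbv]; exact ⟨hmn, le_refl n⟩)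
      have : b = sing k := by
        apply Subtype.ext
        rw [hbv, show (sing k).1 = Set.Icc k k from rfl]
        have e1 : m = k := le_antisymm hm.2 hm.1
        have e2 : n = k := le_antisymm hn.2 hn.1
        rw [e1, e2]
      exact absurd this hb.ne

lemma val_finite (x : BddInterval) : x.1.Finite := by
  rcases x.2 with h | ⟨m, n, _, h⟩ <;> rw [h]
  · exact Set.finite_empty
  · exact Set.finite_Icc m n

lemma prop_locallyFinite : ∀ s : Finset BddInterval, (latticeClosure (s : Set BddInterval)).Finite := by
  intro s
  set M := s.sup id with hM
  have hsub : latticeClosure (s : Set BddInterval) ⊆ {x : BddInterval | x ≤ M} := by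
    apply latticeClosure_min
    · intro a ha
      show a ≤ M
      exact Finset.le_sup (f := id) (Finset.mem_coe.mp ha)
    · constructor
      · intro a ha b hb
        show a ⊔ b ≤ M
        exact sup_le ha hb
      · intro a ha b hb
        show a ⊓ b ≤ M
        exact le_trans inf_le_left ha
  have hfin : {x : BddInterval | x ≤ M}.Finite := by
    apply Set.Finite.of_finite_image (f := Subtype.val)
    · apply Set.Finite.subset (val_finite M).finite_subsets
      rintro _ ⟨x, hx, rfl⟩
      exact hx
    · exact Subtype.val_injective.injOn
  exact hfin.subset hsub

lemma prop_atomistic : ∀ x : BddInterval, ∃ s : Finset BddInterval,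
    (∀ a ∈ s, IsAtom a) ∧ x = s.sup id := by
  classical
  intro x
  rcases x.2 with hx | ⟨m, n, hmn, hx⟩
  · exact ⟨∅, by simp, by rw [Finset.sup_empty]; exact Subtype.ext hx⟩
  · refine ⟨{sing m, sing n}, ?_, ?_⟩
    · intro a ha
      rcases Finset.mem_insert.mp ha with rfl | ha
      · exact isAtom_sing m
      · rw [Finset.mem_singleton.mp ha]
        exact isAtom_sing n
    · rw [Finset.sup_insert, Finset.sup_singleton]
      apply Subtype.ext
      rw [hx]
      exact (sing_sup_sing hmn).symm

lemma prop_jsd : ∀ x y z : BddInterval, x ⊔ z = y ⊔ z → x ⊔ z = (x ⊓ y) ⊔ z := by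
  intro x y z h
  rcases z.2 with hz | ⟨p, q, hpq, hz⟩
  · have hzb : z = ⊥ := Subtype.ext hz
    subst hzb
    rw [sup_bot_eq, sup_bot_eq] at h
    subst h
    rw [inf_idem]
  rcases x.2 with hx | ⟨a, b, hab, hx⟩
  · have hxb : x = ⊥ := Subtype.ext hx
    subst hxb
    rw [bot_sup_eq, bot_inf_eq, bot_sup_eq]
  rcases y.2 with hy | ⟨c, d, hcd, hy⟩
  · have hyb : y = ⊥ := Subtype.ext hy
    subst hyb
    rw [bot_sup_eq] at h
    rw [inf_bot_eq, bot_sup_eq, h]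
  have hxz : (x ⊔ z).1 = Set.Icc (min a p) (max b q) := sup_Icc hab hpq hx hz
  have hyz : (y ⊔ z).1 = Set.Icc (min c p) (max d q) := sup_Icc hcd hpq hy hz
  have hset : Set.Icc (min a p) (max b q) = Set.Icc (min c p) (max d q) := by
    rw [← hxz, ← hyz, h]
  have hm1 : min a p ≤ max b q := le_trans (min_le_left _ _) (le_trans hab (le_max_left _ _))
  have hm2 : min c p ≤ max d q := le_trans (min_le_left _ _) (le_trans hcd (le_max_left _ _))
  have e1 : min a p ∈ Set.Icc (min c p) (max d q) := by
    rw [← hset]; exact ⟨le_refl _, hm1⟩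
  have e2 : min c p ∈ Set.Icc (min a p) (max b q) := by
    rw [hset]; exact ⟨le_refl _, hm2⟩
  have e3 : max b q ∈ Set.Icc (min c p) (max d q) := by
    rw [← hset]; exact ⟨hm1, le_refl _⟩
  have e4 : max d q ∈ Set.Icc (min a p) (max b q) := by
    rw [hset]; exact ⟨hm2, le_refl _⟩
  have h1 : min a p = min c p := le_antisymm e2.1 e1.1
  have h2 : max b q = max d q := le_antisymm e3.2 e4.2
  have hinf : (x ⊓ y).1 = Set.Icc (max a c) (min b d) := by
    rw [inf_val, hx, hy]; exact Set.Icc_inter_Icc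
  by_cases hne : max a c ≤ min b d
  · have hfin : ((x ⊓ y) ⊔ z).1 = Set.Icc (min (max a c) p) (max (min b d) q) :=
      sup_Icc hne hpq hinf hz
    apply Subtype.ext
    rw [hfin, hxz]
    have q1 : min a p = min (max a c) p := by omega
    have q2 : max b q = max (min b d) q := by omega
    rw [q1, q2]
  · push_neg at hne
    have hxy : x ⊓ y = ⊥ := by
      apply Subtype.ext
      rw [hinf, bot_val]
      exact Set.Icc_eq_empty (by omega)
    rw [hxy, bot_sup_eq]
    apply Subtype.ext
    rw [hxz, hz]
    have q1 : min a p = p := by omega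
    have q2 : max b q = q := by omega
    rw [q1, q2]

lemma prop_nontrivial : Nontrivial BddInterval := by
  refine ⟨⊥, sing 0, fun h => ?_⟩
  have h2 : (⊥ : BddInterval).1 = (sing 0).1 := congrArg Subtype.val h
  rw [bot_val] at h2
  have : (0 : ℤ) ∈ (∅ : Set ℤ) := by rw [h2]; exact ⟨le_refl 0, le_refl 0⟩
  exact this

lemma prop_simple_aux {r : BddInterval → BddInterval → Prop}
    (hEq : Equivalence r)
    (hInf : ∀ a b c d : BddInterval, r a b → r c d → r (a ⊓ c) (b ⊓ d))
    (hSup : ∀ a b c d : BddInterval, r a b → r c d → r (a ⊔ c) (b ⊔ d))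
    {a b : BddInterval} (hab : r a b) (hne : a ≠ b) : ∀ x y : BddInterval, r x y := by
  -- collapse a⊓b with a⊔b
  have h1 : r (a ⊓ b) b := by
    have := hInf a b b b hab (hEq.refl b)
    rwa [inf_idem] at this
  have h2 : r (a ⊔ b) b := by
    have := hSup a b b b hab (hEq.refl b)
    rwa [sup_idem] at this
  have huv : r (a ⊓ b) (a ⊔ b) := hEq.trans h1 (hEq.symm h2)
  have hltne : a ⊓ b ≠ a ⊔ b := by
    intro e
    apply hne
    have hba : a ⊔ b ≤ b := by rw [← e]; exact inf_le_right
    have hba' : a ⊔ b ≤ a := by rw [← e]; exact inf_le_left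
    exact le_antisymm (le_trans le_sup_left hba) (le_trans le_sup_right hba')
  -- find k in the difference
  have hsub : (a ⊓ b).1 ⊆ (a ⊔ b).1 := le_iff_subset.mp (le_trans inf_le_left le_sup_left)
  have hssub : (a ⊓ b).1 ⊂ (a ⊔ b).1 :=
    hsub.ssubset_of_ne (fun h => hltne (Subtype.ext h))
  obtain ⟨k, hkv, hku⟩ := Set.exists_of_ssubset hssub
  -- r ⊥ (sing k)
  have h3 := hInf _ _ (sing k) (sing k) huv (hEq.refl _)
  have e1 : (a ⊓ b) ⊓ sing k = ⊥ := by
    apply Subtype.ext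
    rw [inf_val, bot_val, show (sing k).1 = Set.Icc k k from rfl, Set.Icc_self]
    exact Set.inter_singleton_eq_empty.mpr hku
  have e2 : (a ⊔ b) ⊓ sing k = sing k := by
    apply Subtype.ext
    rw [inf_val, show (sing k).1 = Set.Icc k k from rfl, Set.Icc_self]
    exact Set.inter_eq_self_of_subset_right (Set.singleton_subset_iff.mpr hkv)
  rw [e1, e2] at h3
  -- spread to all singletons
  have key : ∀ i j t : ℤ, j ≠ t → min i t ≤ j → j ≤ max i t →
      r ⊥ (sing i) → r ⊥ (sing j) := by
    intro i j t hjt hmin hmax hri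
    have hs := hSup ⊥ (sing i) (sing t) (sing t) hri (hEq.refl _)
    have e1 : (⊥ : BddInterval) ⊔ sing t = sing t := bot_sup_eq _
    set w : BddInterval := ⟨Set.Icc (min i t) (max i t),
      Or.inr ⟨min i t, max i t, by omega, rfl⟩⟩ with hw
    have e2 : sing i ⊔ sing t = w := by
      apply Subtype.ext
      rw [show w.1 = Set.Icc (min i t) (max i t) from rfl]
      exact sup_Icc (le_refl i) (le_refl t) rfl rfl
    rw [e1, e2] at hs
    have hm := hInf _ _ (sing j) (sing j) hs (hEq.refl _)
    have e3 : sing t ⊓ sing j = ⊥ := by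
      apply Subtype.ext
      rw [inf_val, bot_val]
      show Set.Icc t t ∩ Set.Icc j j = ∅
      ext v
      simp only [Set.mem_inter_iff, Set.mem_Icc, Set.mem_empty_iff_false, iff_false, not_and]
      omega
    have e4 : w ⊓ sing j = sing j := by
      apply Subtype.ext
      rw [inf_val]
      show Set.Icc (min i t) (max i t) ∩ Set.Icc j j = Set.Icc j j
      ext v
      simp only [Set.mem_inter_iff, Set.mem_Icc]
      omega
    rw [e3, e4] at hm
    exact hm
  have hall : ∀ j : ℤ, r ⊥ (sing j) := by
    intro j
    by_cases hjk : j = k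
    · rw [hjk]; exact h3
    · exact key k j (2 * j - k) (by omega) (by omega) (by omega) h3
  -- r ⊥ x for every x
  have hallx : ∀ x : BddInterval, r ⊥ x := by
    intro x
    rcases x.2 with hx | ⟨m, n, hmn, hx⟩
    · have : x = ⊥ := Subtype.ext hx
      rw [this]; exact hEq.refl ⊥
    · have hsup := hSup ⊥ (sing m) ⊥ (sing n) (hall m) (hall n)
      have e1 : (⊥ : BddInterval) ⊔ ⊥ = ⊥ := sup_idem ⊥
      have e2 : sing m ⊔ sing n = x := by
        apply Subtype.ext
        rw [sing_sup_sing hmn, hx]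
      rwa [e1, e2] at hsup
  intro x y
  exact hEq.trans (hEq.symm (hallx x)) (hallx y)



end BddIntervalAux

/-- the set of all bounded intervals of `ℤ` (including `∅`),
ordered by inclusion, is a lattice with least element `∅`, meet given by
intersection and join given by the smallest interval containing both; it is
infinite, locally finite, join-semidistributive, atomistic and simple. -/
theorem bddIntervals_lattice_properties :
    ∃ (instL : Lattice BddInterval) (instB : OrderBot BddInterval),
      @Stmt8Body instL instB := by
  refine ⟨BddIntervalAux.instLatticeBI, BddIntervalAux.instBotBI,
    fun x y => Iff.rfl, rfl, fun x y => rfl, ?_,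
    BddIntervalAux.prop_infinite, BddIntervalAux.prop_locallyFinite,
    BddIntervalAux.prop_jsd, BddIntervalAux.prop_atomistic, ?_⟩
  · intro x y
    refine ⟨BddIntervalAux.subset_hull
      ((BddIntervalAux.bddBelow_val x).union (BddIntervalAux.bddBelow_val y))
      ((BddIntervalAux.bddAbove_val x).union (BddIntervalAux.bddAbove_val y)), ?_⟩
    intro z hz
    exact BddIntervalAux.le_iff_subset.mp
      (sup_le (BddIntervalAux.le_iff_subset.mpr (Set.subset_union_left.trans hz))
        (BddIntervalAux.le_iff_subset.mpr (Set.subset_union_right.trans hz)))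
  · refine ⟨BddIntervalAux.prop_nontrivial, fun r hr => ?_⟩
    obtain ⟨hEq, hInf, hSup⟩ := hr
    by_cases h : ∀ a b : BddInterval, r a b → a = b
    · left
      exact fun a b => ⟨h a b, fun e => e ▸ hEq.refl a⟩
    · right
      push_neg at h
      obtain ⟨a, b, hab, hne⟩ := h
      exact BddIntervalAux.prop_simple_aux hEq hInf hSup hab hne
end

section
/- Let m and n be positive integers, let U, V, U_0, …, U_{n-1}, V_0, …, V_{n-1} be lattice terms in m variables, and let R be a lattice term in n variables. Suppose that in every lattice M and for all tuples x⃗, y⃗ ∈ M^m, the inequality U(x⃗) ∧ V(y⃗) ≤ R(U_0(x⃗)∧V_0(y⃗), …, U_{n-1}(x⃗)∧V_{n-1}(y⃗)) holds. Then there exists a nonempty subset J ⊆ {0, …, n-1} such that (a) in every lattice and for every assignment of the n variables, the evaluation of the pure meet term ⋀_{j∈J} x_j is below the evaluation of R, and (b) in every lattice M and for all x⃗, y⃗ ∈ M^m, U(x⃗) ∧ V(y⃗) ≤ ⋀_{j∈J} (U_j(x⃗) ∧ V_j(y⃗)). -/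
/-!
The induction on `R` is trivial for variables and meets; the content is that a join
`R₁ ∨ R₂` on the right can be replaced by one of `R₁`, `R₂`. This is Whitman's condition in
the free lattice: if `U(x⃗) ∧ V(y⃗) ≤ R₁ ∨ R₂` held identically but neither `R₁` nor `R₂` did,
a product of counterexamples, together with a two-element coordinate separating `x⃗` from `y⃗`,
gives a lattice in which `w := U(x⃗) ∧ V(y⃗) ≤ t := R₁ ∨ R₂` while `U(x⃗), V(y⃗), R₁, R₂` all lie
outside `[w, t]`. Doubling the interval `[w, t]` (A. Day's construction) then splits `w` from
`t`, so the inequality fails there.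
-/

universe u

inductive LatTerm (n : ℕ) : Type
  | var : Fin n → LatTerm n
  | meet : LatTerm n → LatTerm n → LatTerm n
  | join : LatTerm n → LatTerm n → LatTerm n

namespace LatTerm

def eval {n : ℕ} {M : Type u} [Lattice M] (v : Fin n → M) : LatTerm n → M
  | var i => v i
  | meet s t => eval v s ⊓ eval v t
  | join s t => eval v s ⊔ eval v t

def dual {n : ℕ} : LatTerm n → LatTerm n
  | var i => var i
  | meet s t => join (dual s) (dual t)
  | join s t => meet (dual s) (dual t)

variable {k m n : ℕ}

theorem map_eval {M N : Type*} [Lattice M] [Lattice N] (f : LatticeHom M N) (v : Fin k → M)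
    (T : LatTerm k) : f (T.eval v) = T.eval (f ∘ v) := by
  induction T with
  | var i => rfl
  | meet s t hs ht => simp only [eval, map_inf, hs, ht]
  | join s t hs ht => simp only [eval, map_sup, hs, ht]

@[simp]
theorem eval_const {M : Type*} [Lattice M] (c : M) (T : LatTerm k) :
    T.eval (fun _ => c) = c := by
  induction T with
  | var i => rfl
  | meet s t hs ht => simp only [eval, hs, ht, inf_idem]
  | join s t hs ht => simp only [eval, hs, ht, sup_idem]

@[simp]
theorem eval_prodMk {M N : Type*} [Lattice M] [Lattice N] (v : Fin k → M) (w : Fin k → N)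
    (T : LatTerm k) : T.eval (fun i => (v i, w i)) = (T.eval v, T.eval w) :=
  Prod.ext (map_eval LatticeHom.fst _ T) (map_eval LatticeHom.snd _ T)

def meets (Us Vs : Fin n → LatTerm m) {M : Type*} [Lattice M] (x y : Fin m → M) (j : Fin n) :
    M :=
  (Us j).eval x ⊓ (Vs j).eval y

@[simp]
theorem meets_const (Us Vs : Fin n → LatTerm m) {M : Type*} [Lattice M] (a b : M) :
    meets Us Vs (fun _ => a) (fun _ => b) = fun _ => a ⊓ b :=
  funext fun j => by simp [meets]

@[simp]
theorem meets_prodMk (Us Vs : Fin n → LatTerm m) {M N : Type*} [Lattice M] [Lattice N]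
    (x y : Fin m → M) (x' y' : Fin m → N) :
    meets Us Vs (fun i => (x i, x' i)) (fun i => (y i, y' i)) =
      fun j => (meets Us Vs x y j, meets Us Vs x' y' j) :=
  funext fun j => by simp [meets]

theorem map_comp_meets (Us Vs : Fin n → LatTerm m) {M N : Type*} [Lattice M] [Lattice N]
    (f : LatticeHom M N) (x y : Fin m → M) :
    f ∘ meets Us Vs x y = meets Us Vs (f ∘ x) (f ∘ y) :=
  funext fun j => by simp only [meets, Function.comp_apply, map_inf, map_eval]

end LatTerm

/-- Day's doubling `M[I]` of a convex subset `I`: every point of `I` is split into a lower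
(`upper = False`) and an upper (`upper = True`) copy; points outside `I` are kept once. -/
@[ext]
structure Doubling {M : Type u} [Lattice M] (I : Set M) : Type u where
  val : M
  upper : Prop
  mem_of_upper : upper → val ∈ I

namespace Doubling

variable {M : Type u} [Lattice M] {I : Set M}

/-- For meets, a point outside `I` counts as upper, for joins as lower. -/
instance [I.OrdConnected] : Lattice (Doubling I) where
  le p q := p.val ≤ q.val ∧ (p.val ∈ I → q.val ∈ I → p.upper → q.upper)
  le_refl p := ⟨le_rfl, fun _ _ => id⟩
  le_trans p q r hpq hqr := by
    refine ⟨hpq.1.trans hqr.1, fun hp hr hup => ?_⟩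
    have hq : q.val ∈ I := Set.OrdConnected.out' hp hr ⟨hpq.1, hqr.1⟩
    exact hqr.2 hq hr (hpq.2 hp hq hup)
  le_antisymm p q hpq hqp := by
    have hval : p.val = q.val := le_antisymm hpq.1 hqp.1
    refine Doubling.ext hval (propext ⟨fun hp => ?_, fun hq => ?_⟩)
    · exact hpq.2 (p.mem_of_upper hp) (hval ▸ p.mem_of_upper hp) hp
    · exact hqp.2 (q.mem_of_upper hq) (hval ▸ q.mem_of_upper hq) hq
  inf p q := ⟨p.val ⊓ q.val,
    p.val ⊓ q.val ∈ I ∧ (p.val ∈ I → p.upper) ∧ (q.val ∈ I → q.upper), And.left⟩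
  inf_le_left _ _ := ⟨inf_le_left, fun _ hp h => h.2.1 hp⟩
  inf_le_right _ _ := ⟨inf_le_right, fun _ hq h => h.2.2 hq⟩
  le_inf _ _ _ hrp hrq := ⟨le_inf hrp.1 hrq.1, fun hr hpq hup =>
    ⟨hpq, fun hp => hrp.2 hr hp hup, fun hq => hrq.2 hr hq hup⟩⟩
  sup p q := ⟨p.val ⊔ q.val,
    p.val ⊔ q.val ∈ I ∧ (p.val ∈ I ∧ p.upper ∨ q.val ∈ I ∧ q.upper), And.left⟩
  le_sup_left _ _ := ⟨le_sup_left, fun hp hpq hup => ⟨hpq, .inl ⟨hp, hup⟩⟩⟩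
  le_sup_right _ _ := ⟨le_sup_right, fun hq hpq hup => ⟨hpq, .inr ⟨hq, hup⟩⟩⟩
  sup_le _ _ _ hpr hqr := by
    refine ⟨sup_le hpr.1 hqr.1, fun _ hr hup => ?_⟩
    rcases hup.2 with ⟨hp, hup⟩ | ⟨hq, hup⟩
    exacts [hpr.2 hp hr hup, hqr.2 hq hr hup]

variable [I.OrdConnected]

def valHom : LatticeHom (Doubling I) M where
  toFun := val
  map_sup' _ _ := rfl
  map_inf' _ _ := rfl

def lower (z : M) : Doubling I := ⟨z, False, False.elim⟩

theorem val_eval {k : ℕ} (v : Fin k → Doubling I) (T : LatTerm k) :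
    (T.eval v).val = T.eval fun i => (v i).val :=
  LatTerm.map_eval valHom v T

/-- `p ⊓ q` is the upper copy of its value and `a ⊔ b` the lower copy of its value. -/
theorem not_inf_le_sup {p q a b : Doubling I} (hp : p.val ∉ I) (hq : q.val ∉ I)
    (ha : a.val ∉ I) (hb : b.val ∉ I) (hpq : p.val ⊓ q.val ∈ I) (hab : a.val ⊔ b.val ∈ I) :
    ¬ p ⊓ q ≤ a ⊔ b := by
  rintro ⟨-, hle⟩
  obtain ⟨-, ha' | hb'⟩ := hle hpq hab ⟨hpq, fun h => (hp h).elim, fun h => (hq h).elim⟩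
  exacts [ha ha'.1, hb hb'.1]

end Doubling

namespace LatTerm

variable {m n : ℕ} {U V : LatTerm m} {Us Vs : Fin n → LatTerm m}

variable (U V Us Vs) in
def MeetBelow (R : LatTerm n) : Prop :=
  ∀ (M : Type u) [Lattice M], ∀ x y : Fin m → M, U.eval x ⊓ V.eval y ≤ R.eval (meets Us Vs x y)

theorem MeetBelow.whitman {R₁ R₂ : LatTerm n} (h : MeetBelow.{u} U V Us Vs (R₁.join R₂))
    {M : Type u} [Lattice M] (x y : Fin m → M) :
    U.eval x ≤ R₁.eval (meets Us Vs x y) ⊔ R₂.eval (meets Us Vs x y) ∨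
    V.eval y ≤ R₁.eval (meets Us Vs x y) ⊔ R₂.eval (meets Us Vs x y) ∨
    U.eval x ⊓ V.eval y ≤ R₁.eval (meets Us Vs x y) ∨
    U.eval x ⊓ V.eval y ≤ R₂.eval (meets Us Vs x y) := by
  by_contra! hfail
  obtain ⟨hU, hV, h₁, h₂⟩ := hfail
  have hwt : U.eval x ⊓ V.eval y ≤ R₁.eval (meets Us Vs x y) ⊔ R₂.eval (meets Us Vs x y) :=
    h M x y
  let I := Set.Icc (U.eval x ⊓ V.eval y) (R₁.eval (meets Us Vs x y) ⊔ R₂.eval (meets Us Vs x y))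
  let x' : Fin m → Doubling I := fun i => Doubling.lower (x i)
  let y' : Fin m → Doubling I := fun i => Doubling.lower (y i)
  have hval {k : ℕ} (T : LatTerm k) (v : Fin k → M) :
      (T.eval fun i => (Doubling.lower (v i) : Doubling I)).val = T.eval v :=
    Doubling.val_eval _ T
  have hmeets (R : LatTerm n) : (R.eval (meets Us Vs x' y')).val = R.eval (meets Us Vs x y) := by
    rw [Doubling.val_eval]
    exact congrArg R.eval (map_comp_meets Us Vs Doubling.valHom x' y')
  refine Doubling.not_inf_le_sup ?_ ?_ ?_ ?_ ?_ ?_ (h (Doubling I) x' y')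
  · rw [hval]; exact fun hmem => hU hmem.2
  · rw [hval]; exact fun hmem => hV hmem.2
  · rw [hmeets]; exact fun hmem => h₁ hmem.1
  · rw [hmeets]; exact fun hmem => h₂ hmem.1
  · rw [hval, hval]; exact ⟨le_rfl, hwt⟩
  · rw [hmeets, hmeets]; exact ⟨hwt, le_rfl⟩

theorem MeetBelow.of_join {R₁ R₂ : LatTerm n} (h : MeetBelow.{u} U V Us Vs (R₁.join R₂)) :
    MeetBelow.{u} U V Us Vs R₁ ∨ MeetBelow.{u} U V Us Vs R₂ := by
  by_contra! hfail
  simp only [MeetBelow, not_forall] at hfail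
  obtain ⟨⟨M₁, _, x₁, y₁, h₁⟩, ⟨M₂, _, x₂, y₂, h₂⟩⟩ := hfail
  -- In the `Prop × Prop` factor every `meets` value is `⊥`, while `U(x⃗)` and `V(y⃗)` are not.
  let x : Fin m → M₁ × M₂ × Prop × Prop := fun i => (x₁ i, x₂ i, True, False)
  let y : Fin m → M₁ × M₂ × Prop × Prop := fun i => (y₁ i, y₂ i, False, True)
  rcases h.whitman x y with hU | hV | hR₁ | hR₂
  · simp [x, y] at hU
  · simp [x, y] at hV
  · simp only [x, y, eval_prodMk, meets_prodMk] at hR₁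
    exact h₁ hR₁.1
  · simp only [x, y, eval_prodMk, meets_prodMk] at hR₂
    exact h₂ hR₂.2.1

end LatTerm

open LatTerm in
theorem exists_pure_meet_below_general {m n : ℕ}
    (U V : LatTerm m) (Us Vs : Fin n → LatTerm m) (R : LatTerm n)
    (h : ∀ (M : Type u) [Lattice M], ∀ x y : Fin m → M,
      U.eval x ⊓ V.eval y ≤ R.eval fun j => (Us j).eval x ⊓ (Vs j).eval y) :
    ∃ (J : Finset (Fin n)) (hJ : J.Nonempty),
      (∀ (M : Type u) [Lattice M], ∀ v : Fin n → M, J.inf' hJ v ≤ R.eval v) ∧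
      (∀ (M : Type u) [Lattice M], ∀ x y : Fin m → M,
        U.eval x ⊓ V.eval y ≤
          J.inf' hJ fun j => (Us j).eval x ⊓ (Vs j).eval y) := by
  induction R with
  | var j => exact ⟨{j}, Finset.singleton_nonempty j, fun _ _ _ => le_rfl, h⟩
  | meet R₁ R₂ ih₁ ih₂ =>
    obtain ⟨J₁, hJ₁, hR₁, hUV₁⟩ := ih₁ fun M _ x y => (h M x y).trans inf_le_left
    obtain ⟨J₂, hJ₂, hR₂, hUV₂⟩ := ih₂ fun M _ x y => (h M x y).trans inf_le_right
    refine ⟨J₁ ∪ J₂, hJ₁.mono Finset.subset_union_left, fun M _ v => ?_, fun M _ x y => ?_⟩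
    · rw [Finset.inf'_union hJ₁ hJ₂]
      exact inf_le_inf (hR₁ M v) (hR₂ M v)
    · rw [Finset.inf'_union hJ₁ hJ₂]
      exact le_inf (hUV₁ M x y) (hUV₂ M x y)
  | join R₁ R₂ ih₁ ih₂ =>
    rcases MeetBelow.of_join h with h₁ | h₂
    · obtain ⟨J, hJ, hR, hUV⟩ := ih₁ h₁
      exact ⟨J, hJ, fun M _ v => (hR M v).trans le_sup_left, hUV⟩
    · obtain ⟨J, hJ, hR, hUV⟩ := ih₂ h₂
      exact ⟨J, hJ, fun M _ v => (hR M v).trans le_sup_right, hUV⟩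

open LatTerm in
/-- Lemma on pure meet polynomials: if the inequality
`U(x⃗) ∧ V(y⃗) ≤ R(U_j(x⃗) ∧ V_j(y⃗) | j < n)` holds in every lattice, then there
is a nonempty `J ⊆ {0,…,n-1}` such that the pure meet term `⋀_{j∈J} x_j` is below
`R` in every lattice, and `U(x⃗) ∧ V(y⃗) ≤ ⋀_{j∈J} (U_j(x⃗) ∧ V_j(y⃗))` holds in
every lattice. -/
theorem exists_pure_meet_below {m n : ℕ} (hm : 0 < m) (hn : 0 < n)
    (U V : LatTerm m) (Us Vs : Fin n → LatTerm m) (R : LatTerm n)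
    (h : ∀ (M : Type u) [Lattice M], ∀ x y : Fin m → M,
      U.eval x ⊓ V.eval y ≤ R.eval fun j => (Us j).eval x ⊓ (Vs j).eval y) :
    ∃ (J : Finset (Fin n)) (hJ : J.Nonempty),
      (∀ (M : Type u) [Lattice M], ∀ v : Fin n → M, J.inf' hJ v ≤ R.eval v) ∧
      (∀ (M : Type u) [Lattice M], ∀ x y : Fin m → M,
        U.eval x ⊓ V.eval y ≤
          J.inf' hJ fun j => (Us j).eval x ⊓ (Vs j).eval y) :=
  exists_pure_meet_below_general U V Us Vs R h
end

section
/- Let L be a lattice and let u = ⟨x, y, z⟩ be a triple of elements of L such that the sublattice of L generated by {x, y, z} is modular. Then u^{(2)} = u^{(1)}. -/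
/-!
Modularity gives the median identity `(b ⊔ a ⊓ c) ⊓ (c ⊔ a ⊓ b) = a ⊓ c ⊔ (a ⊓ b ⊔ b ⊓ c)`,
whose right-hand side lies below `a ⊔ b ⊓ c`. Hence, for `u^{(1)} = ⟨x', y', z'⟩`, the meet
`y' ⊓ z'` lies below `x'` (and symmetrically), so the next step changes nothing. All elements
involved lie in the sublattice generated by `x, y, z`, where the modular law is assumed.
-/

universe u v

/-- The map `⟨x,y,z⟩ ↦ ⟨x∨(y∧z), y∨(x∧z), z∨(x∧y)⟩` on triples. -/
def tripleStep {L : Type u} [Lattice L] (u : L × L × L) : L × L × L :=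
  (u.1 ⊔ (u.2.1 ⊓ u.2.2), u.2.1 ⊔ (u.1 ⊓ u.2.2), u.2.2 ⊔ (u.1 ⊓ u.2.1))

/-- A lattice is `h`-modular if `u^{(h+1)} = u^{(h)}` for every triple `u`. -/
def IsHModular (L : Type u) [Lattice L] (h : ℕ) : Prop :=
  ∀ u : L × L × L, tripleStep^[h + 1] u = tripleStep^[h] u

section

variable {L : Type*} [Lattice L]

def IsModularOn (S : Set L) : Prop :=
  ∀ a b c : L, a ∈ S → b ∈ S → c ∈ S → a ≤ c → a ⊔ (b ⊓ c) = (a ⊔ b) ⊓ c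

theorem IsModularOn.sup_inf_sup_inf_eq {S : Set L} (hmod : IsModularOn S) (hS : IsSublattice S)
    {a b c : L} (ha : a ∈ S) (hb : b ∈ S) (hc : c ∈ S) :
    (b ⊔ a ⊓ c) ⊓ (c ⊔ a ⊓ b) = a ⊓ c ⊔ (a ⊓ b ⊔ b ⊓ c) := by
  have hab : a ⊓ b ∈ S := hS.infClosed ha hb
  have hac : a ⊓ c ∈ S := hS.infClosed ha hc
  calc (b ⊔ a ⊓ c) ⊓ (c ⊔ a ⊓ b) = a ⊓ c ⊔ b ⊓ (c ⊔ a ⊓ b) := by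
        rw [sup_comm b, hmod _ _ _ hac hb (hS.supClosed hc hab) (le_sup_of_le_left inf_le_right)]
    _ = a ⊓ c ⊔ (a ⊓ b ⊔ b ⊓ c) := by
        rw [inf_comm b, sup_comm c, ← hmod _ _ _ hab hc hb inf_le_right, inf_comm c]

theorem IsModularOn.sup_inf_sup_inf_le {S : Set L} (hmod : IsModularOn S) (hS : IsSublattice S)
    {a b c : L} (ha : a ∈ S) (hb : b ∈ S) (hc : c ∈ S) :
    (b ⊔ a ⊓ c) ⊓ (c ⊔ a ⊓ b) ≤ a ⊔ b ⊓ c := by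
  rw [hmod.sup_inf_sup_inf_eq hS ha hb hc]
  exact sup_le (le_sup_of_le_left inf_le_left) (sup_le_sup_right inf_le_left _)

theorem tripleStep_tripleStep_of_le {x y z : L}
    (hx : (y ⊔ x ⊓ z) ⊓ (z ⊔ x ⊓ y) ≤ x ⊔ y ⊓ z)
    (hy : (x ⊔ y ⊓ z) ⊓ (z ⊔ x ⊓ y) ≤ y ⊔ x ⊓ z)
    (hz : (x ⊔ y ⊓ z) ⊓ (y ⊔ x ⊓ z) ≤ z ⊔ x ⊓ y) :
    tripleStep (tripleStep (x, y, z)) = tripleStep (x, y, z) := by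
  simp only [tripleStep, sup_eq_left.mpr hx, sup_eq_left.mpr hy, sup_eq_left.mpr hz]

end

/-- if the sublattice of `L` generated by `{x, y, z}` is
modular, then `u^{(2)} = u^{(1)}` for the triple `u = ⟨x, y, z⟩`. -/
theorem tripleStep_eventually_constant_of_modular {L : Type u} [Lattice L]
    (x y z : L)
    (hmod : ∀ a b c : L, a ∈ latticeClosure {x, y, z} →
      b ∈ latticeClosure {x, y, z} → c ∈ latticeClosure {x, y, z} →
      a ≤ c → a ⊔ (b ⊓ c) = (a ⊔ b) ⊓ c) :
    tripleStep^[2] (x, y, z) = tripleStep^[1] (x, y, z) := by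
  have hS : IsSublattice (latticeClosure ({x, y, z} : Set L)) := isSublattice_latticeClosure
  have hmod' : IsModularOn (latticeClosure ({x, y, z} : Set L)) := hmod
  have hx : x ∈ latticeClosure {x, y, z} := subset_latticeClosure (by simp)
  have hy : y ∈ latticeClosure {x, y, z} := subset_latticeClosure (by simp)
  have hz : z ∈ latticeClosure {x, y, z} := subset_latticeClosure (by simp)
  refine tripleStep_tripleStep_of_le (hmod'.sup_inf_sup_inf_le hS hx hy hz) ?_ ?_
  · simpa only [inf_comm y x] using hmod'.sup_inf_sup_inf_le hS hy hx hz
  · simpa only [inf_comm z y, inf_comm z x] using hmod'.sup_inf_sup_inf_le hS hz hx hy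
end
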